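/- arXiv:1203.2393 — 8 statements merged into one kernel-verified Lean document; each statement's English description precedes it below -/
import Mathlib

section
/- For the PU on–off sampling model with N ≥ 2 samples, duty cycle u ∈ (0,1), departure rate λ_f > 0 and inter-sample times T_1,…,T_{N−1} > 0, the mean squared error of the averaging estimator ũ_a(z) = (1/N)·∑_{n=1}^{N} z_n satisfies V_{ũ_a,N} := ∑_{z ∈ {0,1}^N} (ũ_a(z))² P(z) − u² = u(1−u)/N + (2u(1−u)/N²)·∑_{i=1}^{N−1} ∑_{j=1}^{N−i} ∏_{k=j}^{i+j−1} e^{−T_k λ_f / u}. -/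
open Finset

/-- Transition probabilities of the PU on-off process:
`transProb u lf t x y = Pr_{xy}(t)` where `false` = idle, `true` = active. -/
noncomputable def transProb (u lf t : ℝ) : Bool → Bool → ℝ
  | false, false => 1 - u + u * Real.exp (-(lf * t) / u)
  | false, true  => 1 - (1 - u + u * Real.exp (-(lf * t) / u))
  | true,  true  => u + (1 - u) * Real.exp (-(lf * t) / u)
  | true,  false => 1 - (u + (1 - u) * Real.exp (-(lf * t) / u))

/-- Probability of a binary sample sequence `z` of length `n + 1`
(samples `z 0, …, z n`, i.e. the paper's `z_1, …, z_N` with `N = n + 1`),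
with inter-sample times `T 1, …, T n` (`T k` separates samples `k` and `k+1`):
`P(z) = u^{z_1} (1-u)^{1-z_1} ∏_{k=1}^{N-1} Pr_{z_k z_{k+1}}(T_k)`. -/
noncomputable def seqProb (u lf : ℝ) {n : ℕ} (T : ℕ → ℝ) (z : Fin (n + 1) → Bool) : ℝ :=
  (if z 0 then u else 1 - u) *
    ∏ k : Fin n, transProb u lf (T (k.val + 1)) (z k.castSucc) (z k.succ)

/-! Write `c(b) = 1_b − u` for a centred sample and `e_k = exp(−λ_f T_k / u)`. The on–off chain
contracts centred samples: `∑_y Pr_{xy}(t) c(y) = exp(−λ_f t / u) c(x)`. Summing out the last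
sample therefore gives `E c(z_a) = 0` and, for `a ≤ b`,
`E c(z_a) c(z_b) = u(1−u) ∏_{a<k≤b} e_k`. Since `ũ_a − u = (1/N) ∑ c(z_i)`, the mean squared
error is `N⁻²` times the sum of these covariances over all pairs; the diagonal contributes
`N u(1−u)`, and the pairs `a < b`, indexed by lag `b − a` and start `a + 1`, give the double sum. -/

def centered (u : ℝ) (b : Bool) : ℝ := (if b then 1 else 0) - u

lemma sum_transProb (u lf t : ℝ) (x : Bool) : ∑ y, transProb u lf t x y = 1 := by
  cases x <;> simp [transProb]

lemma sum_centered_mul_transProb (u lf t : ℝ) (x : Bool) :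
    ∑ y, centered u y * transProb u lf t x y = Real.exp (-(lf * t) / u) * centered u x := by
  cases x <;> simp only [transProb, centered, Fintype.sum_bool, Bool.false_eq_true, ↓reduceIte] <;>
    ring

lemma seqProb_snoc (u lf : ℝ) {n : ℕ} (T : ℕ → ℝ) (y : Fin (n + 1) → Bool) (b : Bool) :
    seqProb u lf T (Fin.snoc y b : Fin (n + 2) → Bool) =
      seqProb u lf T y * transProb u lf (T (n + 1)) (y (Fin.last n)) b := by
  simp only [seqProb, Fin.prod_univ_castSucc, Fin.snoc_castSucc, Fin.succ_castSucc, Fin.succ_last,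
    Fin.snoc_last, Fin.val_last, Fin.val_castSucc]
  rw [show (0 : Fin (n + 2)) = Fin.castSucc 0 from rfl, Fin.snoc_castSucc, mul_assoc]

lemma sum_mul_seqProb_succ (u lf : ℝ) {n : ℕ} (T : ℕ → ℝ) (F : (Fin (n + 2) → Bool) → ℝ) :
    ∑ z, F z * seqProb u lf T z =
      ∑ y : Fin (n + 1) → Bool, seqProb u lf T y *
        ∑ b, F (Fin.snoc y b) * transProb u lf (T (n + 1)) (y (Fin.last n)) b := by
  rw [← (Fin.snocEquiv fun _ => Bool).sum_comp, Fintype.sum_prod_type_right]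
  refine sum_congr rfl fun y _ => ?_
  rw [mul_sum]
  refine sum_congr rfl fun b _ => ?_
  rw [show (Fin.snocEquiv fun _ => Bool) (b, y) = Fin.snoc y b from rfl, seqProb_snoc]
  ring

lemma sum_mul_seqProb_zero (u lf : ℝ) (T : ℕ → ℝ) (F : (Fin 1 → Bool) → ℝ) :
    ∑ z, F z * seqProb u lf T z = F (fun _ => true) * u + F (fun _ => false) * (1 - u) := by
  rw [← (Equiv.funUnique (Fin 1) Bool).symm.sum_comp, Fintype.sum_bool]
  simp only [seqProb, univ_eq_empty, prod_empty, mul_one]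
  rfl

lemma sum_comp_init_mul_seqProb (u lf : ℝ) {n : ℕ} (T : ℕ → ℝ) (F : (Fin (n + 1) → Bool) → ℝ) :
    ∑ z : Fin (n + 2) → Bool, F (Fin.init z) * seqProb u lf T z = ∑ y, F y * seqProb u lf T y := by
  rw [sum_mul_seqProb_succ]
  simp only [Fin.init_snoc, ← mul_sum, sum_transProb, mul_one, mul_comm]

lemma sum_comp_init_mul_centered_last_mul_seqProb (u lf : ℝ) {n : ℕ} (T : ℕ → ℝ)
    (F : (Fin (n + 1) → Bool) → ℝ) :
    ∑ z : Fin (n + 2) → Bool, F (Fin.init z) * centered u (z (Fin.last _)) * seqProb u lf T z =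
      Real.exp (-(lf * T (n + 1)) / u) *
        ∑ y, F y * centered u (y (Fin.last n)) * seqProb u lf T y := by
  rw [sum_mul_seqProb_succ, mul_sum]
  refine sum_congr rfl fun y _ => ?_
  simp only [Fin.init_snoc, Fin.snoc_last, mul_assoc, ← mul_sum, sum_centered_mul_transProb]
  ring

lemma sum_seqProb (u lf : ℝ) {n : ℕ} (T : ℕ → ℝ) :
    ∑ z : Fin (n + 1) → Bool, seqProb u lf T z = 1 := by
  induction n with
  | zero => simpa using sum_mul_seqProb_zero u lf T fun _ => 1
  | succ n ih => simpa [ih] using sum_comp_init_mul_seqProb u lf T (n := n) fun _ => 1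

lemma sum_centered_mul_seqProb (u lf : ℝ) {n : ℕ} (T : ℕ → ℝ) (a : Fin (n + 1)) :
    ∑ z, centered u (z a) * seqProb u lf T z = 0 := by
  induction n with
  | zero =>
    rw [sum_mul_seqProb_zero]
    simp only [centered, Bool.false_eq_true, ↓reduceIte]
    ring
  | succ n ih =>
    induction a using Fin.lastCases with
    | last =>
      simpa [ih] using sum_comp_init_mul_centered_last_mul_seqProb u lf T (n := n) fun _ => 1
    | cast a => exact (sum_comp_init_mul_seqProb u lf T fun y => centered u (y a)).trans (ih a)

lemma centered_mul_self (u : ℝ) (b : Bool) :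
    centered u b * centered u b = (1 - 2 * u) * centered u b + u * (1 - u) := by
  cases b <;> simp only [centered, Bool.false_eq_true, ↓reduceIte] <;> ring

lemma sum_centered_mul_self_mul_seqProb (u lf : ℝ) {n : ℕ} (T : ℕ → ℝ) (a : Fin (n + 1)) :
    ∑ z, centered u (z a) * centered u (z a) * seqProb u lf T z = u * (1 - u) := by
  simp only [centered_mul_self, add_mul, sum_add_distrib, mul_assoc, ← mul_sum,
    sum_centered_mul_seqProb, sum_seqProb]
  ring

lemma sum_centered_mul_centered_mul_seqProb_of_le (u lf : ℝ) {n : ℕ} (T : ℕ → ℝ)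
    {a b : Fin (n + 1)} (hab : a ≤ b) :
    ∑ z, centered u (z a) * centered u (z b) * seqProb u lf T z =
      u * (1 - u) * ∏ k ∈ Ioc (a : ℕ) b, Real.exp (-(lf * T k) / u) := by
  induction n with
  | zero =>
    rw [Fin.fin_one_eq_zero a, Fin.fin_one_eq_zero b, sum_centered_mul_self_mul_seqProb]
    simp
  | succ n ih =>
    rcases hab.eq_or_lt with rfl | hlt
    · rw [sum_centered_mul_self_mul_seqProb, Ioc_self, prod_empty, mul_one]
    induction b using Fin.lastCases with
    | last =>
      induction a using Fin.lastCases with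
      | last => exact absurd hlt (lt_irrefl _)
      | cast a =>
        refine (sum_comp_init_mul_centered_last_mul_seqProb u lf T
          fun y => centered u (y a)).trans ?_
        rw [ih (Fin.le_last a), Fin.val_last, Fin.val_castSucc, Fin.val_last,
          prod_Ioc_succ_top (by omega)]
        ring
    | cast b =>
      induction a using Fin.lastCases with
      | last => exact absurd hlt (Fin.castSucc_lt_last b).not_gt
      | cast a =>
        exact (sum_comp_init_mul_seqProb u lf T fun y => centered u (y a) * centered u (y b)).trans
          (ih (Fin.castSucc_le_castSucc_iff.mp hab))

lemma sum_range_sum_range_eq_diag_add_offDiag {M : Type*} [AddCommMonoid M] (f : ℕ → ℕ → M)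
    (N : ℕ) :
    ∑ i ∈ range N, ∑ j ∈ range N, f i j =
      ∑ i ∈ range N, f i i + ∑ j ∈ range N, ∑ i ∈ range j, (f i j + f j i) := by
  induction N with
  | zero => simp
  | succ N ih =>
    simp only [sum_range_succ, sum_add_distrib, ih]
    abel

lemma sum_range_sum_range_eq_sum_lag {M : Type*} [AddCommMonoid M] (f : ℕ → ℕ → M) (n : ℕ) :
    ∑ j ∈ range (n + 1), ∑ i ∈ range j, f (i + 1) j =
      ∑ d ∈ Icc 1 n, ∑ s ∈ Icc 1 (n + 1 - d), f s (d + s - 1) := by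
  rw [sum_sigma', sum_sigma']
  refine sum_bij' (fun p _ => ⟨p.1 - p.2, p.2 + 1⟩) (fun p _ => ⟨p.1 + p.2 - 1, p.2 - 1⟩)
    ?_ ?_ ?_ ?_ ?_ <;> rintro ⟨j, i⟩ h <;>
    simp only [mem_sigma, mem_range, mem_Icc, Sigma.mk.injEq, heq_eq_eq] at h ⊢
  all_goals first | omega | (congr 1; omega)

lemma sum_centered_mul_centered_mul_seqProb (u lf : ℝ) {n : ℕ} (T : ℕ → ℝ) (a b : Fin (n + 1)) :
    ∑ z, centered u (z a) * centered u (z b) * seqProb u lf T z =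
      u * (1 - u) * ∏ k ∈ Ioc (min a b : ℕ) (max a b), Real.exp (-(lf * T k) / u) := by
  rcases le_total a b with hab | hba
  · rw [sum_centered_mul_centered_mul_seqProb_of_le u lf T hab, min_eq_left (by simpa),
      max_eq_right (by simpa)]
  · rw [min_eq_right (by simpa), max_eq_left (by simpa),
      ← sum_centered_mul_centered_mul_seqProb_of_le u lf T hba]
    exact sum_congr rfl fun z _ => by ring

lemma sum_sum_centered_mul_seqProb (u lf : ℝ) {n : ℕ} (T : ℕ → ℝ) :
    ∑ z : Fin (n + 1) → Bool, (∑ i, centered u (z i)) * seqProb u lf T z = 0 := by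
  simp_rw [sum_mul]
  rw [sum_comm]
  simp [sum_centered_mul_seqProb]

lemma sum_sq_sum_centered_mul_seqProb (u lf : ℝ) {n : ℕ} (T : ℕ → ℝ) :
    ∑ z : Fin (n + 1) → Bool, (∑ i, centered u (z i)) ^ 2 * seqProb u lf T z =
      u * (1 - u) * ((n + 1) + 2 * ∑ d ∈ Icc 1 n, ∑ s ∈ Icc 1 (n + 1 - d),
        ∏ k ∈ Icc s (d + s - 1), Real.exp (-(lf * T k) / u)) := by
  set E : ℕ → ℕ → ℝ := fun i j => ∏ k ∈ Ioc i j, Real.exp (-(lf * T k) / u)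
  calc ∑ z : Fin (n + 1) → Bool, (∑ i, centered u (z i)) ^ 2 * seqProb u lf T z
      = ∑ i : Fin (n + 1), ∑ j : Fin (n + 1),
          ∑ z, centered u (z i) * centered u (z j) * seqProb u lf T z := by
        simp_rw [sq, sum_mul_sum, sum_mul]
        rw [sum_comm]
        exact sum_congr rfl fun _ _ => sum_comm
    _ = u * (1 - u) * ∑ i ∈ range (n + 1), ∑ j ∈ range (n + 1), E (min i j) (max i j) := by
        simp_rw [sum_centered_mul_centered_mul_seqProb, ← mul_sum, sum_range]
        rfl
    _ = u * (1 - u) * ((n + 1) + 2 * ∑ j ∈ range (n + 1), ∑ i ∈ range j, E i j) := by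
        have hoff : ∀ j, ∀ i ∈ range j,
            E (min i j) (max i j) + E (min j i) (max j i) = E i j + E i j := fun j i hi => by
          rw [min_eq_left, max_eq_right, min_eq_right, max_eq_left] <;> grind
        rw [sum_range_sum_range_eq_diag_add_offDiag,
          sum_congr rfl fun j _ => sum_congr rfl (hoff j)]
        simp [E, sum_add_distrib, two_mul]
    _ = _ := by
        rw [← sum_range_sum_range_eq_sum_lag fun s j => ∏ k ∈ Icc s j, Real.exp (-(lf * T k) / u)]
        simp_rw [E, Icc_add_one_left_eq_Ioc]

theorem avg_estimator_mse_general (u lf : ℝ) (n : ℕ) (T : ℕ → ℝ) :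
    (∑ z : Fin (n + 1) → Bool,
        ((∑ i, (if z i then (1 : ℝ) else 0)) / ((n : ℝ) + 1)) ^ 2 * seqProb u lf T z) - u ^ 2
      = u * (1 - u) / ((n : ℝ) + 1)
        + 2 * u * (1 - u) / ((n : ℝ) + 1) ^ 2 *
          ∑ i ∈ Finset.Icc 1 n, ∑ j ∈ Finset.Icc 1 (n + 1 - i),
            ∏ k ∈ Finset.Icc j (i + j - 1), Real.exp (-(lf * T k) / u) := by
  have hN : (n : ℝ) + 1 ≠ 0 := by positivity
  have hexpand : ∀ z : Fin (n + 1) → Bool,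
      ((∑ i, (if z i then (1 : ℝ) else 0)) / (n + 1)) ^ 2 * seqProb u lf T z =
        (∑ i, centered u (z i)) ^ 2 * seqProb u lf T z / (n + 1) ^ 2
          + 2 * u / (n + 1) * ((∑ i, centered u (z i)) * seqProb u lf T z)
          + u ^ 2 * seqProb u lf T z := fun z => by
    simp only [centered, sum_sub_distrib, sum_const, card_univ, Fintype.card_fin, nsmul_eq_mul]
    field_simp
    push_cast
    ring
  simp only [hexpand, sum_add_distrib, ← sum_div, ← mul_sum]
  rw [sum_sq_sum_centered_mul_seqProb, sum_sum_centered_mul_seqProb, sum_seqProb]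
  field_simp
  ring

/-- mean squared error of the averaging estimator
`ũ_a(z) = (1/N) ∑ z_n` for `N = n + 1 ≥ 2` samples. -/
theorem avg_estimator_mse (u lf : ℝ) (hu : 0 < u) (hu1 : u < 1) (hlf : 0 < lf)
    (n : ℕ) (hn : 1 ≤ n) (T : ℕ → ℝ) (hT : ∀ k, 1 ≤ k → k ≤ n → 0 < T k) :
    (∑ z : Fin (n + 1) → Bool,
        ((∑ i, (if z i then (1 : ℝ) else 0)) / ((n : ℝ) + 1)) ^ 2 * seqProb u lf T z) - u ^ 2
      = u * (1 - u) / ((n : ℝ) + 1)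
        + 2 * u * (1 - u) / ((n : ℝ) + 1) ^ 2 *
          ∑ i ∈ Finset.Icc 1 n, ∑ j ∈ Finset.Icc 1 (n + 1 - i),
            ∏ k ∈ Finset.Icc j (i + j - 1), Real.exp (-(lf * T k) / u) :=
  avg_estimator_mse_general u lf n T
end

section
/- For the PU on–off sampling model, let V_{ũ_a,N}(T_1,…,T_{N−1}) = u(1−u)/N + (2u(1−u)/N²)·∑_{i=1}^{N−1} ∑_{j=1}^{N−i} ∏_{k=j}^{i+j−1} e^{−T_k λ_f/u} and let V_{ũ_a,N+1}(T_1,…,T_N) be the analogous expression with N+1 samples (obtained by appending one further inter-sample time T_N > 0). Then the decrease in mean squared error from one extra sample satisfies D_{ũ_a,N+1} := V_{ũ_a,N} − V_{ũ_a,N+1} = ((2N+1)/(N+1)²)·V_{ũ_a,N} − (u(1−u)/(N+1)²)·(1 + 2·∑_{i=0}^{N−1} ∏_{k=N−i}^{N} e^{−T_k λ_f/u}). -/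
open Finset

/-- Closed form for the mean squared error of the averaging duty-cycle estimator
with `N` samples and inter-sample times `T 1, …, T (N-1)`:
`V = u(1-u)/N + (2u(1-u)/N²) ∑_{i=1}^{N-1} ∑_{j=1}^{N-i} ∏_{k=j}^{i+j-1} e^{-T_k λ_f/u}`. -/
noncomputable def Vavg (u lf : ℝ) (N : ℕ) (T : ℕ → ℝ) : ℝ :=
  u * (1 - u) / (N : ℝ) + 2 * u * (1 - u) / (N : ℝ) ^ 2 *
    ∑ i ∈ Finset.Icc 1 (N - 1), ∑ j ∈ Finset.Icc 1 (N - i),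
      ∏ k ∈ Finset.Icc j (i + j - 1), Real.exp (-(lf * T k) / u)

/-!
Adding the sample at time `N` keeps every window of consecutive inter-sample times inside
`1, …, N - 1` and adds exactly the windows ending at `N`, i.e. the products
`∏_{k=N-i}^{N} e^{-T_k λ_f/u}` for `i < N`. Together with the change of normalisation
from `N` to `N + 1`, the identity is then a rational-function identity in `N`.
-/

section IntervalProdSum

variable {R : Type*} [CommSemiring R]

/-- The sum of `∏_{k=a}^{b} e k` over all `1 ≤ a ≤ b ≤ N - 1`, indexed by the length `i = b - a + 1`
and the start `j = a` as in `Vavg`. -/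
def intervalProdSum (e : ℕ → R) (N : ℕ) : R :=
  ∑ i ∈ Icc 1 (N - 1), ∑ j ∈ Icc 1 (N - i), ∏ k ∈ Icc j (i + j - 1), e k

lemma intervalProdSum_succ (e : ℕ → R) (N : ℕ) :
    intervalProdSum e (N + 1) =
      intervalProdSum e N + ∑ i ∈ range N, ∏ k ∈ Icc (N - i) N, e k := by
  have split_last : ∀ i ∈ Icc 1 N,
      ∑ j ∈ Icc 1 (N + 1 - i), ∏ k ∈ Icc j (i + j - 1), e k =
        ∑ j ∈ Icc 1 (N - i), ∏ k ∈ Icc j (i + j - 1), e k + ∏ k ∈ Icc (N + 1 - i) N, e k := by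
    intro i hi
    rw [mem_Icc] at hi
    rw [show N + 1 - i = N - i + 1 by omega, sum_Icc_succ_top (by omega),
      show i + (N - i + 1) - 1 = N by omega]
  have drop_top :
      ∑ i ∈ Icc 1 N, ∑ j ∈ Icc 1 (N - i), ∏ k ∈ Icc j (i + j - 1), e k =
        ∑ i ∈ Icc 1 (N - 1), ∑ j ∈ Icc 1 (N - i), ∏ k ∈ Icc j (i + j - 1), e k := by
    refine (sum_subset (Icc_subset_Icc_right (Nat.sub_le N 1)) fun i hi hi' => ?_).symm
    rw [mem_Icc] at hi hi'
    rw [show N - i = 0 by omega]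
    simp
  have reindex :
      ∑ i ∈ Icc 1 N, ∏ k ∈ Icc (N + 1 - i) N, e k = ∑ i ∈ range N, ∏ k ∈ Icc (N - i) N, e k := by
    rw [← Ico_add_one_right_eq_Icc, sum_Ico_eq_sum_range, Nat.add_sub_cancel]
    refine sum_congr rfl fun i _ => ?_
    rw [show N + 1 - (1 + i) = N - i by omega]
  rw [intervalProdSum, intervalProdSum, Nat.add_sub_cancel, sum_congr rfl split_last,
    sum_add_distrib, drop_top, reindex]

end IntervalProdSum

theorem avg_estimator_mse_decrease_general (u lf : ℝ) (N : ℕ) (T : ℕ → ℝ) :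
    Vavg u lf N T - Vavg u lf (N + 1) T
      = (2 * (N : ℝ) + 1) / ((N : ℝ) + 1) ^ 2 * Vavg u lf N T
        - u * (1 - u) / ((N : ℝ) + 1) ^ 2 *
          (1 + 2 * ∑ i ∈ Finset.range N,
            ∏ k ∈ Finset.Icc (N - i) N, Real.exp (-(lf * T k) / u)) := by
  rcases N.eq_zero_or_pos with rfl | hN
  · simp [Vavg]
  have hV : ∀ n : ℕ, Vavg u lf n T = u * (1 - u) / n + 2 * u * (1 - u) / (n : ℝ) ^ 2 *
      intervalProdSum (fun k => Real.exp (-(lf * T k) / u)) n := fun _ => rfl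
  rw [hV, hV, intervalProdSum_succ]
  push_cast
  field_simp
  ring

/-- decrease of the mean squared error obtained from one extra sample. -/
theorem avg_estimator_mse_decrease (u lf : ℝ) (hu : 0 < u) (hu1 : u < 1) (hlf : 0 < lf)
    (N : ℕ) (hN : 2 ≤ N) (T : ℕ → ℝ) (hT : ∀ k, 1 ≤ k → k ≤ N → 0 < T k) :
    Vavg u lf N T - Vavg u lf (N + 1) T
      = (2 * (N : ℝ) + 1) / ((N : ℝ) + 1) ^ 2 * Vavg u lf N T
        - u * (1 - u) / ((N : ℝ) + 1) ^ 2 *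
          (1 + 2 * ∑ i ∈ Finset.range N,
            ∏ k ∈ Finset.Icc (N - i) N, Real.exp (-(lf * T k) / u)) :=
  avg_estimator_mse_decrease_general u lf N T
end

section
/- Fix a total observation window T > 0, duty cycle u ∈ (0,1) and departure rate λ_f > 0. For N ≥ 2 samples under uniform sampling with inter-sample time T_u = T/(N−1) and Γ_u = e^{−λ_f T_u/u}, let V_{ũ_{ua},N} = u(1−u)/N + (2u(1−u)/N²)·Γ_u·(Γ_u^N − N(Γ_u−1) − 1)/(1−Γ_u)². Then lim_{N→∞} V_{ũ_{ua},N} = (2u(1−u)/η²)·(e^{−η} + η − 1), where η = T·λ_f/u. -/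
/-!
Write `Γ_N = exp (-η/(N-1))` with `η = T λ_f / u`. Then `Γ_N → 1`, `Γ_N ^ N = exp (-η N/(N-1)) → e^{-η}`, and, since
`exp` has slope `1` at `0`, `N (1 - Γ_N) → η`. Rewriting the error as
`c/N + 2c Γ_N (Γ_N^N + N(1 - Γ_N) - 1) / (N(1 - Γ_N))²` with `c = u(1-u)`, every piece converges
and the denominator tends to `η² ≠ 0`.
-/

open Filter Topology Real

lemma tendsto_natCast_div_sub_one :
    Tendsto (fun N : ℕ => (N : ℝ) / ((N : ℝ) - 1)) atTop (𝓝 1) := by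
  simpa only [sub_eq_add_neg] using tendsto_natCast_div_add_atTop (-1 : ℝ)

lemma tendsto_exp_neg_div_sub_one_pow (η : ℝ) :
    Tendsto (fun N : ℕ => exp (-(η / ((N : ℝ) - 1))) ^ N) atTop (𝓝 (exp (-η))) := by
  have h : Tendsto (fun N : ℕ => exp (-(η * ((N : ℝ) / ((N : ℝ) - 1))))) atTop
      (𝓝 (exp (-η))) := by
    simpa using ((tendsto_natCast_div_sub_one.const_mul η).neg).rexp
  refine h.congr fun N => ?_
  rw [← exp_nat_mul]
  ring_nf

lemma tendsto_natCast_mul_one_sub_exp_neg_div (η : ℝ) :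
    Tendsto (fun N : ℕ => (N : ℝ) * (1 - exp (-(η / ((N : ℝ) - 1))))) atTop (𝓝 η) := by
  have hslope : Tendsto (fun N : ℕ => dslope exp 0 (-(η / ((N : ℝ) - 1)))) atTop (𝓝 1) := by
    have hcont : ContinuousAt (dslope exp 0) 0 :=
      continuousAt_dslope_same.mpr differentiableAt_exp
    have hx : Tendsto (fun N : ℕ => -(η / ((N : ℝ) - 1))) atTop (𝓝 0) := by
      simpa [sub_eq_add_neg] using (tendsto_const_nhds.div_atTop
        (tendsto_atTop_add_const_right _ (-1 : ℝ) tendsto_natCast_atTop_atTop)).neg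
    have h := hcont.tendsto.comp hx
    rwa [dslope_same, Real.deriv_exp, exp_zero] at h
  have h := (tendsto_natCast_div_sub_one.const_mul η).mul hslope
  rw [mul_one, mul_one] at h
  refine h.congr fun N => ?_
  -- `exp y - 1 = y * dslope exp 0 y` holds for every `y`, including `y = 0`
  have hsub := sub_smul_dslope exp 0 (-(η / ((N : ℝ) - 1)))
  simp only [sub_zero, smul_eq_mul, exp_zero] at hsub
  linear_combination (-(N : ℝ)) * hsub

lemma tendsto_mse_of_tendsto_natCast_mul_one_sub {c η g : ℝ} {Γ : ℕ → ℝ} (hη : η ≠ 0)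
    (hpow : Tendsto (fun N : ℕ => Γ N ^ N) atTop (𝓝 g))
    (hlin : Tendsto (fun N : ℕ => (N : ℝ) * (1 - Γ N)) atTop (𝓝 η)) :
    Tendsto (fun N : ℕ => c / N + 2 * c / (N : ℝ) ^ 2 * Γ N * (Γ N ^ N - N * (Γ N - 1) - 1)
      / (1 - Γ N) ^ 2) atTop (𝓝 (2 * c / η ^ 2 * (g + η - 1))) := by
  have hinv : Tendsto (fun N : ℕ => (N : ℝ)⁻¹) atTop (𝓝 0) :=
    tendsto_inv_atTop_zero.comp tendsto_natCast_atTop_atTop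
  have hΓ : Tendsto Γ atTop (𝓝 1) := by
    have h := (hlin.mul hinv).const_sub 1
    rw [mul_zero, sub_zero] at h
    refine h.congr' ?_
    filter_upwards [eventually_ne_atTop 0] with N hN
    field_simp
    ring
  have h := (hinv.const_mul c).add
    (((hΓ.const_mul (2 * c)).mul ((hpow.add hlin).sub_const 1)).div (hlin.pow 2) (by positivity))
  convert h using 2 with N
  · rw [Pi.div_apply, mul_pow, ← div_div]
    ring
  · ring

theorem avg_estimator_uniform_mse_limit_general (u lf T : ℝ)
    (hu : 0 < u) (hlf : 0 < lf) (hT : 0 < T) :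
    Filter.Tendsto
      (fun N : ℕ =>
        u * (1 - u) / (N : ℝ)
          + 2 * u * (1 - u) / (N : ℝ) ^ 2 *
              Real.exp (-(lf * (T / ((N : ℝ) - 1))) / u) *
              ((Real.exp (-(lf * (T / ((N : ℝ) - 1))) / u)) ^ N
                - (N : ℝ) * (Real.exp (-(lf * (T / ((N : ℝ) - 1))) / u) - 1) - 1)
            / (1 - Real.exp (-(lf * (T / ((N : ℝ) - 1))) / u)) ^ 2)
      Filter.atTop
      (nhds (2 * u * (1 - u) / (T * lf / u) ^ 2 *
        (Real.exp (-(T * lf / u)) + T * lf / u - 1))) := by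
  have hη : T * lf / u ≠ 0 := by positivity
  have hexponent (N : ℕ) :
      -(lf * (T / ((N : ℝ) - 1))) / u = -(T * lf / u / ((N : ℝ) - 1)) := by ring
  have h := tendsto_mse_of_tendsto_natCast_mul_one_sub (c := u * (1 - u)) hη
    (tendsto_exp_neg_div_sub_one_pow _) (tendsto_natCast_mul_one_sub_exp_neg_div _)
  simp only [hexponent]
  convert h using 3 <;> ring

/-- for uniform sampling over a fixed window `T`, the mean squared
error of the averaging estimator tends, as the number of samples `N → ∞`, to
`(2u(1-u)/η²)(e^{-η} + η - 1)` where `η = Tλ_f/u`. -/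
theorem avg_estimator_uniform_mse_limit (u lf T : ℝ)
    (hu : 0 < u) (hu1 : u < 1) (hlf : 0 < lf) (hT : 0 < T) :
    Filter.Tendsto
      (fun N : ℕ =>
        u * (1 - u) / (N : ℝ)
          + 2 * u * (1 - u) / (N : ℝ) ^ 2 *
              Real.exp (-(lf * (T / ((N : ℝ) - 1))) / u) *
              ((Real.exp (-(lf * (T / ((N : ℝ) - 1))) / u)) ^ N
                - (N : ℝ) * (Real.exp (-(lf * (T / ((N : ℝ) - 1))) / u) - 1) - 1)
            / (1 - Real.exp (-(lf * (T / ((N : ℝ) - 1))) / u)) ^ 2)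
      Filter.atTop
      (nhds (2 * u * (1 - u) / (T * lf / u) ^ 2 *
        (Real.exp (-(T * lf / u)) + T * lf / u - 1))) :=
  avg_estimator_uniform_mse_limit_general u lf T hu hlf hT
end

section
/- For the PU on–off sampling model with sensing errors, let P_f, P_m ∈ [0,1] with P_f + P_m ≠ 1, and define the unbiased estimator ũ_{a,s}(z̃) = (1/(1−P_f−P_m))·(−P_f + (1/N)·∑_{n=1}^{N} z̃_n). Then its mean squared error satisfies V_{ũ_{a,s},N} := ∑_{z̃ ∈ {0,1}^N} (ũ_{a,s}(z̃))² P̃(z̃) − u² = (2u(1−u)/N²)·∑_{i=1}^{N−1} ∑_{j=1}^{N−i} ∏_{k=j}^{i+j−1} e^{−T_k λ_f/u} + u(1−u)/N + (u·P_m(1−P_m) + (1−u)·P_f(1−P_f)) / (N·(1−P_f−P_m)²). -/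
open Finset

/-- Sensing-error kernel `q(z̃ | z)`: `q(1|0) = P_f`, `q(0|0) = 1 - P_f`,
`q(0|1) = P_m`, `q(1|1) = 1 - P_m`. -/
noncomputable def senseErr (Pf Pm : ℝ) : Bool → Bool → ℝ
  | true,  false => Pf
  | false, false => 1 - Pf
  | false, true  => Pm
  | true,  true  => 1 - Pm

/-- Distribution of the observed (sensed) sample sequence `z̃`:
`P̃(z̃) = ∑_z P(z) ∏_n q(z̃_n | z_n)`. -/
noncomputable def obsProb (u lf Pf Pm : ℝ) {n : ℕ} (T : ℕ → ℝ) (zt : Fin (n + 1) → Bool) : ℝ :=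
  ∑ z : Fin (n + 1) → Bool, seqProb u lf T z * ∏ i, senseErr Pf Pm (zt i) (z i)

section Helpers

namespace MSEaux

lemma peel_sum {m : ℕ} (F : (Fin (m + 2) → Bool) → ℝ) :
    (∑ z : Fin (m + 2) → Bool, F z)
      = ∑ y : Fin (m + 1) → Bool, ∑ b : Bool, F (Fin.snoc y b) := by
  rw [← Fintype.sum_prod_type']
  exact (Fintype.sum_equiv ((Equiv.prodComm _ _).trans (Fin.snocEquiv fun _ => Bool))
    (fun p => F (Fin.snoc p.1 p.2)) F (fun p => rfl)).symm

lemma seqProb_snoc (u lf : ℝ) {m : ℕ} (T : ℕ → ℝ) (y : Fin (m + 1) → Bool) (b : Bool) :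
    seqProb u lf T (Fin.snoc y b) =
      seqProb u lf T y * transProb u lf (T (m + 1)) (y (Fin.last m)) b := by
  unfold seqProb
  rw [Fin.prod_univ_castSucc]
  have h0 : (Fin.snoc y b : Fin (m + 2) → Bool) 0 = y 0 := by
    show (Fin.snoc y b : Fin (m + 2) → Bool) (Fin.castSucc 0) = y 0
    rw [Fin.snoc_castSucc]
  rw [h0]
  simp only [Fin.succ_castSucc, Fin.snoc_castSucc, Fin.succ_last, Fin.snoc_last,
    Fin.coe_castSucc, Fin.val_last]
  ring

lemma trans_row (u lf t : ℝ) (b : Bool) : (∑ c : Bool, transProb u lf t b c) = 1 := by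
  cases b <;> simp [transProb]

/-- marginal of the last coordinate is the stationary distribution -/
lemma chain_last (u lf : ℝ) (T : ℕ → ℝ) (m : ℕ) (φ : Bool → ℝ) :
    (∑ z : Fin (m + 1) → Bool, seqProb u lf T z * φ (z (Fin.last m)))
      = (1 - u) * φ false + u * φ true := by
  induction m generalizing φ with
  | zero =>
    rw [show (∑ z : Fin 1 → Bool, seqProb u lf T z * φ (z (Fin.last 0)))
        = ∑ b : Bool, seqProb u lf T (fun _ => b) * φ b from
      Fintype.sum_equiv (Equiv.funUnique (Fin 1) Bool) _ _ (fun z => by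
        have hz : z = fun _ => z 0 := funext fun t => by rw [Subsingleton.elim t 0]
        conv_lhs => rw [hz]
        rfl)]
    simp [seqProb]
    ring
  | succ m ih =>
    rw [peel_sum]
    have key : ∀ y : Fin (m + 1) → Bool,
        (∑ b : Bool, seqProb u lf T (Fin.snoc y b) *
          φ ((Fin.snoc y b : Fin (m + 2) → Bool) (Fin.last (m + 1))))
        = seqProb u lf T y *
            (fun c => ∑ b : Bool, transProb u lf (T (m + 1)) c b * φ b) (y (Fin.last m)) := by
      intro y
      simp only [Fin.snoc_last, Finset.mul_sum]
      exact Finset.sum_congr rfl fun b _ => by rw [seqProb_snoc]; ring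
    rw [Finset.sum_congr rfl fun y _ => key y,
      ih (fun c => ∑ b : Bool, transProb u lf (T (m + 1)) c b * φ b)]
    simp [transProb]
    ring

/-- coordinates beyond `j` can be summed out -/
lemma chain_trunc (u lf : ℝ) (T : ℕ → ℝ) :
    ∀ (m j : ℕ) (hj : j ≤ m) (Ψ : (Fin (j + 1) → Bool) → ℝ),
    (∑ z : Fin (m + 1) → Bool,
        seqProb u lf T z * Ψ (fun t => z (Fin.castLE (by omega) t)))
      = ∑ y : Fin (j + 1) → Bool, seqProb u lf T y * Ψ y := by
  intro m
  induction m with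
  | zero =>
    intro j hj Ψ
    interval_cases j
    refine Finset.sum_congr rfl fun z _ => ?_
    congr 1
  | succ m ih =>
    intro j hj Ψ
    by_cases hjm : j = m + 1
    · subst hjm
      refine Finset.sum_congr rfl fun z _ => ?_
      congr 1
    · have hj' : j ≤ m := by omega
      rw [peel_sum]
      have key : ∀ y : Fin (m + 1) → Bool,
          (∑ b : Bool, seqProb u lf T (Fin.snoc y b) *
            Ψ (fun t => (Fin.snoc y b : Fin (m + 2) → Bool) (Fin.castLE (by omega) t)))
          = seqProb u lf T y * Ψ (fun t => y (Fin.castLE (by omega) t)) := by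
        intro y
        have harg : ∀ b (t : Fin (j + 1)),
            (Fin.snoc y b : Fin (m + 2) → Bool) (Fin.castLE (by omega) t)
              = y (Fin.castLE (by omega) t) := by
          intro b t
          have : (Fin.castLE (by omega : j + 1 ≤ m + 2) t)
              = Fin.castSucc (Fin.castLE (by omega : j + 1 ≤ m + 1) t) := by
            apply Fin.ext; rfl
          rw [this, Fin.snoc_castSucc]
        have : ∀ b : Bool, seqProb u lf T (Fin.snoc y b) *
            Ψ (fun t => (Fin.snoc y b : Fin (m + 2) → Bool) (Fin.castLE (by omega) t))
            = (seqProb u lf T y * Ψ (fun t => y (Fin.castLE (by omega) t)))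
              * transProb u lf (T (m + 1)) (y (Fin.last m)) b := by
          intro b
          rw [seqProb_snoc]
          simp only [harg b]
          ring
        rw [Finset.sum_congr rfl fun b _ => this b, ← Finset.mul_sum, trans_row, mul_one]
      rw [Finset.sum_congr rfl fun y _ => key y, ih j hj']

end MSEaux

namespace MSEaux

noncomputable def Kmat (u ε : ℝ) : Bool → Bool → ℝ
  | false, false => 1 - u + u * ε
  | false, true  => u * (1 - ε)
  | true,  true  => u + (1 - u) * ε
  | true,  false => (1 - u) * (1 - ε)

lemma transProb_eq_K (u lf t : ℝ) (b c : Bool) :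
    transProb u lf t b c = Kmat u (Real.exp (-(lf * t) / u)) b c := by
  cases b <;> cases c <;> simp [transProb, Kmat] <;> ring

lemma chain_single (u lf : ℝ) (T : ℕ → ℝ) (m i : ℕ) (hi : i ≤ m) (φ : Bool → ℝ) :
    (∑ z : Fin (m + 1) → Bool, seqProb u lf T z * φ (z ⟨i, by omega⟩))
      = (1 - u) * φ false + u * φ true := by
  exact (chain_trunc u lf T m i hi (fun y => φ (y (Fin.last i)))).trans
    (chain_last u lf T i φ)

lemma chain_pair_base (u lf : ℝ) (T : ℕ → ℝ) (m : ℕ) (φ : Bool → ℝ) :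
    (∑ z : Fin (m + 1) → Bool, seqProb u lf T z *
        ((if z (Fin.last m) then (1:ℝ) else 0) * φ (z (Fin.last m))))
      = u * φ true := by
  have := chain_last u lf T m (fun b => (if b then (1:ℝ) else 0) * φ b)
  simpa using this

lemma chain_pair_aux (u lf : ℝ) (T : ℕ → ℝ) (i : ℕ) :
    ∀ (j : ℕ) (hij : i ≤ j) (φ : Bool → ℝ),
    (∑ z : Fin (j + 1) → Bool, seqProb u lf T z *
        ((if z ⟨i, by omega⟩ then (1:ℝ) else 0) * φ (z (Fin.last j))))
      = u * ∑ b : Bool,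
          Kmat u (∏ k ∈ Icc (i+1) j, Real.exp (-(lf * T k) / u)) true b * φ b := by
  intro j
  induction j with
  | zero =>
    intro hij φ
    have hi0 : i = 0 := by omega
    subst hi0
    rw [Finset.Icc_eq_empty (by omega), Finset.prod_empty]
    exact (chain_pair_base u lf T 0 φ).trans (by simp [Kmat])
  | succ j ihj =>
    intro hij φ
    by_cases hij' : i = j + 1
    · subst hij'
      rw [Finset.Icc_eq_empty (by omega), Finset.prod_empty]
      exact (chain_pair_base u lf T (j + 1) φ).trans (by simp [Kmat])
    · have hij'' : i ≤ j := by omega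
      rw [peel_sum]
      have key : ∀ y : Fin (j + 1) → Bool,
          (∑ b : Bool, seqProb u lf T (Fin.snoc y b) *
            ((if (Fin.snoc y b : Fin (j + 2) → Bool) ⟨i, by omega⟩ then (1:ℝ) else 0) *
              φ ((Fin.snoc y b : Fin (j + 2) → Bool) (Fin.last (j + 1)))))
          = seqProb u lf T y *
              ((if y ⟨i, by omega⟩ then (1:ℝ) else 0) *
                (fun c => ∑ b : Bool, transProb u lf (T (j + 1)) c b * φ b) (y (Fin.last j))) := by
        intro y
        have harg : ∀ b : Bool,
            (Fin.snoc y b : Fin (j + 2) → Bool) ⟨i, by omega⟩ = y ⟨i, by omega⟩ := by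
          intro b
          have : (⟨i, by omega⟩ : Fin (j + 2))
              = Fin.castSucc (⟨i, by omega⟩ : Fin (j + 1)) := by
            apply Fin.ext; rfl
          rw [this, Fin.snoc_castSucc]
        simp only [Fin.snoc_last, harg, Finset.mul_sum]
        refine Finset.sum_congr rfl fun b _ => ?_
        rw [seqProb_snoc]
        ring
      rw [Finset.sum_congr rfl fun y _ => key y,
        ihj hij'' (fun c => ∑ b : Bool, transProb u lf (T (j + 1)) c b * φ b),
        Finset.prod_Icc_succ_top (by omega : i + 1 ≤ j + 1)]
      simp only [Fintype.sum_bool, transProb_eq_K, Kmat]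
      ring

lemma chain_pair (u lf : ℝ) (T : ℕ → ℝ) (m i j : ℕ) (hij : i < j) (hj : j ≤ m) :
    (∑ z : Fin (m + 1) → Bool, seqProb u lf T z *
        ((if z ⟨i, by omega⟩ then (1:ℝ) else 0) * (if z ⟨j, by omega⟩ then (1:ℝ) else 0)))
      = u * (u + (1 - u) * ∏ k ∈ Icc (i+1) j, Real.exp (-(lf * T k) / u)) := by
  have step1 := chain_trunc u lf T m j hj
    (fun y => (if y ⟨i, by omega⟩ then (1:ℝ) else 0) * (if y (Fin.last j) then (1:ℝ) else 0))
  have step2 := chain_pair_aux u lf T i j (le_of_lt hij) (fun b => if b then (1:ℝ) else 0)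
  refine step1.trans (step2.trans ?_)
  simp [Kmat]

end MSEaux

namespace MSEaux

lemma sense_row (Pf Pm : ℝ) (z : Bool) : (∑ b : Bool, senseErr Pf Pm b z) = 1 := by
  cases z <;> simp [senseErr] <;> ring

lemma sense_pair (Pf Pm : ℝ) (hc : 1 - Pf - Pm ≠ 0) {N : ℕ} (z : Fin N → Bool) (i j : Fin N) :
    (∑ zt : Fin N → Bool,
      (((if zt i then (1:ℝ) else 0) - Pf) / (1 - Pf - Pm)) *
      (((if zt j then (1:ℝ) else 0) - Pf) / (1 - Pf - Pm)) *
      ∏ k, senseErr Pf Pm (zt k) (z k))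
    = if i = j then
        (if z i then ((1-Pf)^2*(1-Pm) + Pf^2*Pm) else Pf*(1-Pf)) / (1-Pf-Pm)^2
      else (if z i then (1:ℝ) else 0) * (if z j then (1:ℝ) else 0) := by
  classical
  set h : Bool → ℝ := fun b => ((if b then (1:ℝ) else 0) - Pf) / (1 - Pf - Pm) with hh
  have key : ∀ zt : Fin N → Bool,
      (h (zt i)) * (h (zt j)) * ∏ k, senseErr Pf Pm (zt k) (z k)
      = ∏ k, ((if k = i then h (zt k) else 1) *
          ((if k = j then h (zt k) else 1) * senseErr Pf Pm (zt k) (z k))) := by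
    intro zt
    rw [Finset.prod_mul_distrib, Finset.prod_mul_distrib]
    simp [Finset.prod_ite_eq']
    ring
  have expand := Fintype.prod_sum (fun (k : Fin N) (b : Bool) =>
    (if k = i then h b else 1) * ((if k = j then h b else 1) * senseErr Pf Pm b (z k)))
  rw [Finset.sum_congr rfl fun zt _ => key zt, ← expand]
  by_cases hij : i = j
  · subst hij
    have ptw : ∀ k : Fin N, k ∈ univ → (∑ b : Bool, ((if k = i then h b else 1) *
          ((if k = i then h b else 1) * senseErr Pf Pm b (z k))))
        = if k = i then
            (if z k then ((1-Pf)^2*(1-Pm) + Pf^2*Pm) else Pf*(1-Pf)) / (1-Pf-Pm)^2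
          else 1 := by
      intro k _
      by_cases hk : k = i
      · subst hk
        simp only [if_pos rfl, hh]
        cases hz : z k <;> simp [senseErr] <;> field_simp <;> ring
      · simp only [if_neg hk]
        simp only [one_mul]
        cases z k <;> simp [senseErr] <;> ring
    rw [Finset.prod_congr rfl ptw, Finset.prod_ite_eq']
    simp
  · have ptw : ∀ k : Fin N, k ∈ univ → (∑ b : Bool, ((if k = i then h b else 1) *
          ((if k = j then h b else 1) * senseErr Pf Pm b (z k))))
        = (if k = i then (if z k then (1:ℝ) else 0) else 1) *
            (if k = j then (if z k then (1:ℝ) else 0) else 1) := by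
      intro k _
      by_cases hk : k = i
      · subst hk
        rw [if_neg hij]
        simp only [if_pos rfl, if_neg hij, hh]
        cases hz : z k <;> simp [senseErr] <;> field_simp <;> ring
      · by_cases hk' : k = j
        · subst hk'
          simp only [if_neg hk, if_pos rfl, hh]
          cases hz : z k <;> simp [senseErr] <;> field_simp <;> ring
        · simp only [if_neg hk, if_neg hk', one_mul]
          cases z k <;> simp [senseErr] <;> ring
    rw [Finset.prod_congr rfl ptw, Finset.prod_mul_distrib,
      Finset.prod_ite_eq', Finset.prod_ite_eq']
    simp [hij]

end MSEaux

namespace MSEaux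

lemma sym_double_sum (f : ℕ → ℕ → ℝ) (hsym : ∀ a b, f a b = f b a) (N : ℕ) :
    (∑ a ∈ range N, ∑ b ∈ range N, f a b)
      = (∑ a ∈ range N, f a a) + 2 * ∑ b ∈ range N, ∑ a ∈ range b, f a b := by
  induction N with
  | zero => simp
  | succ N ih =>
    simp only [Finset.sum_range_succ]
    rw [Finset.sum_add_distrib, ih]
    have hs : (∑ b ∈ range N, f N b) = ∑ b ∈ range N, f b N :=
      Finset.sum_congr rfl fun b _ => hsym N b
    rw [hs]
    ring

lemma gauss (n : ℕ) : (∑ b ∈ range (n + 1), (b : ℝ)) = n * (n + 1) / 2 := by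
  induction n with
  | zero => simp
  | succ n ih =>
    rw [Finset.sum_range_succ, ih]
    push_cast
    ring

lemma reindex (n : ℕ) (g : ℕ → ℝ) :
    (∑ b ∈ range (n + 1), ∑ a ∈ range b, ∏ k ∈ Icc (a + 1) b, g k)
      = ∑ d ∈ Icc 1 n, ∑ s ∈ Icc 1 (n + 1 - d), ∏ k ∈ Icc s (d + s - 1), g k := by
  rw [Finset.sum_sigma', Finset.sum_sigma']
  refine Finset.sum_nbij' (i := fun p => (⟨p.1 - p.2, p.2 + 1⟩ : (_ : ℕ) × ℕ))
    (j := fun q => (⟨q.1 + q.2 - 1, q.2 - 1⟩ : (_ : ℕ) × ℕ))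
    ?_ ?_ ?_ ?_ ?_
  · rintro ⟨b, a⟩ hp
    simp only [Finset.mem_sigma, Finset.mem_range, Finset.mem_Icc] at hp ⊢
    omega
  · rintro ⟨d, s⟩ hq
    simp only [Finset.mem_sigma, Finset.mem_range, Finset.mem_Icc] at hq ⊢
    omega
  · rintro ⟨b, a⟩ hp
    simp only [Finset.mem_sigma, Finset.mem_range] at hp
    have h1 : b - a + (a + 1) - 1 = b := by omega
    have h2 : a + 1 - 1 = a := by omega
    simp [h1, h2]
  · rintro ⟨d, s⟩ hq
    simp only [Finset.mem_sigma, Finset.mem_Icc] at hq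
    have h1 : d + s - 1 - (s - 1) = d := by omega
    have h2 : s - 1 + 1 = s := by omega
    simp [h1, h2]
  · rintro ⟨b, a⟩ hp
    simp only [Finset.mem_sigma, Finset.mem_range] at hp
    have h1 : b - a + (a + 1) - 1 = b := by omega
    simp [h1]

end MSEaux

end Helpers

open MSEaux

/-- mean squared error of the bias-corrected averaging estimator
`ũ_{a,s}(z̃) = (1/(1-P_f-P_m))(-P_f + (1/N) ∑ z̃_n)` under sensing errors,
with `N = n + 1 ≥ 2` samples. -/
theorem avg_estimator_mse_sensing_errors (u lf Pf Pm : ℝ)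
    (hu : 0 < u) (hu1 : u < 1) (hlf : 0 < lf)
    (hPf : Pf ∈ Set.Icc (0 : ℝ) 1) (hPm : Pm ∈ Set.Icc (0 : ℝ) 1) (hPfm : Pf + Pm ≠ 1)
    (n : ℕ) (hn : 1 ≤ n) (T : ℕ → ℝ) (hT : ∀ k, 1 ≤ k → k ≤ n → 0 < T k) :
    (∑ zt : Fin (n + 1) → Bool,
        (1 / (1 - Pf - Pm) *
          (-Pf + (∑ i, (if zt i then (1 : ℝ) else 0)) / ((n : ℝ) + 1))) ^ 2
          * obsProb u lf Pf Pm T zt) - u ^ 2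
      = 2 * u * (1 - u) / ((n : ℝ) + 1) ^ 2 *
          ∑ i ∈ Finset.Icc 1 n, ∑ j ∈ Finset.Icc 1 (n + 1 - i),
            ∏ k ∈ Finset.Icc j (i + j - 1), Real.exp (-(lf * T k) / u)
        + u * (1 - u) / ((n : ℝ) + 1)
        + (u * Pm * (1 - Pm) + (1 - u) * Pf * (1 - Pf))
            / (((n : ℝ) + 1) * (1 - Pf - Pm) ^ 2) := by
  classical
  have hc : (1 - Pf - Pm) ≠ 0 := by intro h; apply hPfm; linarith
  have hN : ((n : ℝ) + 1) ≠ 0 := by positivity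
  -- shorthand functions
  set H : Fin (n+1) → (Fin (n+1) → Bool) → ℝ :=
    fun i zt => ((if zt i then (1:ℝ) else 0) - Pf) / (1 - Pf - Pm) with hH
  set Hd : Bool → ℝ :=
    fun b => (if b then ((1-Pf)^2*(1-Pm) + Pf^2*Pm) else Pf*(1-Pf)) / (1-Pf-Pm)^2 with hHd
  set D : ℝ := (1 - u) * Hd false + u * Hd true with hD
  set g : ℕ → ℕ → ℝ := fun a b => if a = b then D
    else u * (u + (1 - u) * ∏ k ∈ Icc (min a b + 1) (max a b), Real.exp (-(lf * T k) / u))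
    with hg
  -- rewrite the estimator squared
  have hsum : ∀ zt : Fin (n+1) → Bool, (∑ i, H i zt)
      = ((∑ i, (if zt i then (1:ℝ) else 0)) - ((n:ℝ)+1) * Pf) / (1 - Pf - Pm) := by
    intro zt
    rw [hH, ← Finset.sum_div]
    congr 1
    rw [Finset.sum_sub_distrib, Finset.sum_const, card_univ, Fintype.card_fin,
      nsmul_eq_mul]
    push_cast
    ring
  have hest : ∀ zt : Fin (n+1) → Bool,
      (1 / (1 - Pf - Pm) * (-Pf + (∑ i, (if zt i then (1:ℝ) else 0)) / ((n:ℝ)+1))) ^ 2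
      = (1 / ((n:ℝ)+1)^2) * ∑ i, ∑ j, H i zt * H j zt := by
    intro zt
    rw [← Finset.sum_mul_sum, hsum zt]
    field_simp
    ring
  -- step 1: reorganize the full sum
  have step1 : (∑ zt : Fin (n + 1) → Bool,
        (1 / (1 - Pf - Pm) *
          (-Pf + (∑ i, (if zt i then (1 : ℝ) else 0)) / ((n : ℝ) + 1))) ^ 2
          * obsProb u lf Pf Pm T zt)
      = ∑ z : Fin (n+1) → Bool, seqProb u lf T z * ∑ i, ∑ j, (1 / ((n:ℝ)+1)^2) *
          ∑ zt : Fin (n+1) → Bool,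
            (H i zt * H j zt * ∏ k, senseErr Pf Pm (zt k) (z k)) := by
    unfold obsProb
    simp only [Finset.mul_sum]
    rw [Finset.sum_comm]
    refine Finset.sum_congr rfl fun z _ => ?_
    rw [Finset.sum_congr rfl fun zt _ => by rw [hest zt]]
    simp only [Finset.sum_mul, Finset.mul_sum]
    rw [Finset.sum_comm]
    refine Finset.sum_congr rfl fun i _ => ?_
    rw [Finset.sum_comm]
    refine Finset.sum_congr rfl fun j _ => Finset.sum_congr rfl fun zt _ => by ring
  -- step 2: evaluate the inner zt-sum using sense_pair
  have step2 : ∀ (z : Fin (n+1) → Bool) (i j : Fin (n+1)),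
      (∑ zt : Fin (n+1) → Bool,
          (H i zt * H j zt * ∏ k, senseErr Pf Pm (zt k) (z k)))
      = if i = j then Hd (z i) else (if z i then (1:ℝ) else 0) * (if z j then (1:ℝ) else 0) := by
    intro z i j
    rw [hH, hHd]
    exact sense_pair Pf Pm hc z i j
  -- step 3: evaluate the z-sum using the chain lemmas
  have step3 : ∀ i j : Fin (n+1),
      (∑ z : Fin (n+1) → Bool, seqProb u lf T z *
        (if i = j then Hd (z i) else (if z i then (1:ℝ) else 0) * (if z j then (1:ℝ) else 0)))
      = g i.val j.val := by
    intro i j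
    by_cases hij : i = j
    · subst hij
      have e1 : (∑ z : Fin (n+1) → Bool, seqProb u lf T z *
          (if i = i then Hd (z i)
           else (if z i then (1:ℝ) else 0) * (if z i then (1:ℝ) else 0)))
          = ∑ z : Fin (n+1) → Bool, seqProb u lf T z * Hd (z i) :=
        Finset.sum_congr rfl fun z _ => by rw [if_pos rfl]
      rw [e1, show g i.val i.val = D from by simp [hg]]
      exact chain_single u lf T n i.val (by omega) Hd
    · have hvij : i.val ≠ j.val := fun h => hij (Fin.ext h)
      have e1 : (∑ z : Fin (n+1) → Bool, seqProb u lf T z *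
          (if i = j then Hd (z i)
           else (if z i then (1:ℝ) else 0) * (if z j then (1:ℝ) else 0)))
          = ∑ z : Fin (n+1) → Bool, seqProb u lf T z *
              ((if z i then (1:ℝ) else 0) * (if z j then (1:ℝ) else 0)) :=
        Finset.sum_congr rfl fun z _ => by rw [if_neg hij]
      rw [e1]
      rcases lt_or_gt_of_ne hvij with hlt | hgt
      · rw [show g i.val j.val = u * (u + (1 - u) *
            ∏ k ∈ Icc (i.val + 1) j.val, Real.exp (-(lf * T k) / u)) from by
          simp only [hg, if_neg hvij, min_eq_left hlt.le, max_eq_right hlt.le]]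
        exact chain_pair u lf T n i.val j.val hlt (by omega)
      · rw [show g i.val j.val = u * (u + (1 - u) *
            ∏ k ∈ Icc (j.val + 1) i.val, Real.exp (-(lf * T k) / u)) from by
          simp only [hg, if_neg hvij, min_eq_right hgt.le, max_eq_left hgt.le]]
        have e2 : (∑ z : Fin (n+1) → Bool, seqProb u lf T z *
            ((if z i then (1:ℝ) else 0) * (if z j then (1:ℝ) else 0)))
            = ∑ z : Fin (n+1) → Bool, seqProb u lf T z *
              ((if z j then (1:ℝ) else 0) * (if z i then (1:ℝ) else 0)) :=
          Finset.sum_congr rfl fun z _ => by ring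
        rw [e2]
        exact chain_pair u lf T n j.val i.val hgt (by omega)
  -- step 4: put everything together as a double Fin-sum
  have e1 : ∀ z : Fin (n+1) → Bool,
      (∑ i : Fin (n+1), ∑ j : Fin (n+1), (1 / ((n:ℝ)+1)^2) *
        ∑ zt : Fin (n+1) → Bool,
          (H i zt * H j zt * ∏ k, senseErr Pf Pm (zt k) (z k)))
      = ∑ i : Fin (n+1), ∑ j : Fin (n+1), (1 / ((n:ℝ)+1)^2) *
          (if i = j then Hd (z i)
           else (if z i then (1:ℝ) else 0) * (if z j then (1:ℝ) else 0)) :=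
    fun z => Finset.sum_congr rfl fun i _ => Finset.sum_congr rfl fun j _ => by
      rw [step2 z i j]
  have step4 : (∑ zt : Fin (n + 1) → Bool,
        (1 / (1 - Pf - Pm) *
          (-Pf + (∑ i, (if zt i then (1 : ℝ) else 0)) / ((n : ℝ) + 1))) ^ 2
          * obsProb u lf Pf Pm T zt)
      = ∑ i : Fin (n+1), ∑ j : Fin (n+1), (1 / ((n:ℝ)+1)^2) * g i.val j.val := by
    rw [step1]
    rw [Finset.sum_congr rfl (fun z _ => congrArg (fun t => seqProb u lf T z * t) (e1 z))]
    simp only [Finset.mul_sum]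
    rw [Finset.sum_comm]
    refine Finset.sum_congr rfl fun i _ => ?_
    rw [Finset.sum_comm]
    refine Finset.sum_congr rfl fun j _ => ?_
    rw [← step3 i j, Finset.mul_sum]
    exact Finset.sum_congr rfl fun z _ => by ring
  -- step 5: convert to sums over `range`
  have step5 : (∑ zt : Fin (n + 1) → Bool,
        (1 / (1 - Pf - Pm) *
          (-Pf + (∑ i, (if zt i then (1 : ℝ) else 0)) / ((n : ℝ) + 1))) ^ 2
          * obsProb u lf Pf Pm T zt)
      = (1 / ((n:ℝ)+1)^2) * ∑ a ∈ range (n+1), ∑ b ∈ range (n+1), g a b := by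
    rw [step4,
      Finset.sum_congr rfl (fun i (_ : i ∈ univ) =>
        Fin.sum_univ_eq_sum_range (fun b => (1 / ((n:ℝ)+1)^2) * g i.val b) (n+1)),
      Fin.sum_univ_eq_sum_range
        (fun a => ∑ b ∈ range (n+1), (1 / ((n:ℝ)+1)^2) * g a b) (n+1)]
    simp only [Finset.mul_sum]
  -- step 6: evaluate the double range sum
  have hgsym : ∀ a b, g a b = g b a := by
    intro a b
    rcases eq_or_ne a b with h | h
    · subst h; rfl
    · simp only [hg, if_neg h, if_neg h.symm, min_comm, max_comm]
  set Sigma : ℝ := ∑ d ∈ Finset.Icc 1 n, ∑ s ∈ Finset.Icc 1 (n + 1 - d),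
      ∏ k ∈ Finset.Icc s (d + s - 1), Real.exp (-(lf * T k) / u) with hSigma
  have step6 : (∑ a ∈ range (n+1), ∑ b ∈ range (n+1), g a b)
      = ((n:ℝ)+1) * D + 2 * ((u*u) * ((n:ℝ)*((n:ℝ)+1)/2) + u*(1-u) * Sigma) := by
    rw [sym_double_sum g hgsym (n+1)]
    have hdiag : (∑ a ∈ range (n+1), g a a) = ((n:ℝ)+1) * D := by
      rw [Finset.sum_congr rfl (fun a _ => show g a a = D from by simp [hg])]
      rw [Finset.sum_const, card_range, nsmul_eq_mul]
      push_cast; ring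
    have hoff : (∑ b ∈ range (n+1), ∑ a ∈ range b, g a b)
        = (u*u) * ((n:ℝ)*((n:ℝ)+1)/2) + u*(1-u) * Sigma := by
      have e3 : (∑ b ∈ range (n+1), ∑ a ∈ range b, g a b)
          = ∑ b ∈ range (n+1), ∑ a ∈ range b,
              (u*u + u*(1-u) * ∏ k ∈ Icc (a+1) b, Real.exp (-(lf * T k) / u)) :=
        Finset.sum_congr rfl fun b _ => Finset.sum_congr rfl fun a ha => by
          have hab : a < b := mem_range.mp ha
          simp only [hg, if_neg hab.ne, min_eq_left hab.le, max_eq_right hab.le]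
          ring
      rw [e3]
      simp only [Finset.sum_add_distrib, Finset.sum_const, card_range, nsmul_eq_mul,
        ← Finset.mul_sum]
      rw [← Finset.sum_mul, gauss n, reindex n (fun k => Real.exp (-(lf * T k) / u)),
        ← hSigma]
      ring
    rw [hdiag, hoff]
  -- final algebra
  rw [step5, step6]
  have hDval : D = ((1-u)*(Pf*(1-Pf)) + u*((1-Pf)^2*(1-Pm)+Pf^2*Pm)) / (1-Pf-Pm)^2 := by
    simp only [hD, hHd, if_true, Bool.false_eq_true, if_false]
    ring
  rw [hDval]
  field_simp
  ring
end

section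
/- Let N ≥ 2 and let Γ_1,…,Γ_{N−1} ∈ (0,1]. Define the symmetric (N−1)×(N−1) real matrix Ĥ by Ĥ_{a,b} = ∑_{i=1}^{a} ∑_{j=b}^{N−1} ∏_{k=i}^{j} Γ_k for a ≤ b, and Ĥ_{a,b} = Ĥ_{b,a} for a > b. Then Ĥ is positive semidefinite. -/
open Finset

/-!
With `c i = Γ 1 * ⋯ * Γ i`, the product `∏_{k=i}^{j} Γ k` is `c j / c (i-1)`, so for `a ≤ b` the
entry factors as `F a * G b` with `F a = ∑_{i=1}^{a+1} (c (i-1))⁻¹` and `G b = ∑_{j=b+1}^{m} c j`.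
A matrix `F (min a b) * G (max a b)` with `G > 0` is `D * M * D` for `D = diagonal G` and
`M a b = h (min a b)`, `h = F / G`. If `h` is nonnegative and nondecreasing, `M` is a nonnegative
combination of the rank-one matrices `[t < a] * [t < b]`, hence positive semidefinite; here `F`
increases and `G` decreases.
-/

namespace Matrix

theorem posSemidef_min_of_monotone {m : ℕ} (h : ℕ → ℝ) (h0 : 0 ≤ h 0)
    (hmono : ∀ t, t + 1 < m → h t ≤ h (t + 1)) :
    (of fun a b : Fin m => h (min (a : ℕ) b)).PosSemidef := by
  set u : ℕ → Fin m → ℝ := fun t a => if t < a then 1 else 0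
  have hdecomp : (of fun a b : Fin m => h (min (a : ℕ) b)) =
      h 0 • vecMulVec 1 1 + ∑ t ∈ range (m - 1), (h (t + 1) - h t) • vecMulVec (u t) (u t) := by
    ext a b
    have hfilter : {t ∈ range (m - 1) | t < (b : ℕ) ∧ t < (a : ℕ)} = range (min (a : ℕ) b) := by
      ext t; simp only [mem_filter, mem_range]; omega
    simp only [of_apply, add_apply, smul_apply, vecMulVec_apply, sum_apply, u, Pi.one_apply,
      smul_eq_mul, mul_ite, mul_one, mul_zero, ← ite_and, ← sum_filter, hfilter, sum_range_sub]
    ring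
  have hvv (v : Fin m → ℝ) : (vecMulVec v v).PosSemidef := by
    simpa using posSemidef_vecMulVec_self_star v
  rw [hdecomp]
  refine ((hvv 1).smul h0).add (posSemidef_sum _ fun t ht => (hvv (u t)).smul ?_)
  have := hmono t (by rw [mem_range] at ht; omega)
  linarith

theorem posSemidef_min_mul_max {m : ℕ} (f g : ℕ → ℝ) (hf0 : 0 ≤ f 0)
    (hg : ∀ t < m, 0 < g t) (hfg : ∀ t, t + 1 < m → f t * g (t + 1) ≤ f (t + 1) * g t) :
    (of fun a b : Fin m => f (min (a : ℕ) b) * g (max (a : ℕ) b)).PosSemidef := by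
  rcases Nat.eq_zero_or_pos m with rfl | hm
  · convert PosSemidef.zero (n := Fin 0) (R := ℝ) using 1; exact Subsingleton.elim _ _
  have hratio : (of fun a b : Fin m => f (min (a : ℕ) b) / g (min (a : ℕ) b)).PosSemidef := by
    refine posSemidef_min_of_monotone (fun t => f t / g t) (div_nonneg hf0 (hg 0 hm).le)
      fun t ht => ?_
    rw [div_le_div_iff₀ (hg t (by omega)) (hg (t + 1) ht)]
    exact hfg t ht
  have hscale : (of fun a b : Fin m => f (min (a : ℕ) b) * g (max (a : ℕ) b)) =
      (diagonal fun a : Fin m => g a)ᴴ *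
        (of fun a b : Fin m => f (min (a : ℕ) b) / g (min (a : ℕ) b)) *
          diagonal fun a : Fin m => g a := by
    ext a b
    have hga := hg a a.isLt
    have hgb := hg b b.isLt
    simp only [diagonal_conjTranspose, diagonal_mul, mul_diagonal, of_apply, star_trivial]
    rcases le_total (a : ℕ) b with hab | hba
    · rw [min_eq_left hab, max_eq_right hab]; field_simp
    · rw [min_eq_right hba, max_eq_left hba]; field_simp
  rw [hscale]
  exact hratio.conjTranspose_mul_mul_same _

end Matrix

namespace DutyCycle

def cumProd (Γ : ℕ → ℝ) (i : ℕ) : ℝ := ∏ k ∈ Icc 1 i, Γ k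

noncomputable def headSum (Γ : ℕ → ℝ) (a : ℕ) : ℝ := ∑ i ∈ Icc 1 (a + 1), (cumProd Γ (i - 1))⁻¹

def tailSum (m : ℕ) (Γ : ℕ → ℝ) (b : ℕ) : ℝ := ∑ j ∈ Icc (b + 1) m, cumProd Γ j

variable {m : ℕ} {Γ : ℕ → ℝ}

theorem cumProd_mul_prod_Icc {l j : ℕ} (hlj : l ≤ j) :
    cumProd Γ l * ∏ k ∈ Icc (l + 1) j, Γ k = cumProd Γ j := by
  have hIcc (n : ℕ) : Icc 1 n = Ioc 0 n := Icc_add_one_left_eq_Ioc 0 n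
  rw [cumProd, cumProd, hIcc, hIcc, Icc_add_one_left_eq_Ioc]
  exact prod_Ioc_consecutive Γ l.zero_le hlj

theorem sum_sum_prod_Icc_eq_headSum_mul_tailSum {a b : ℕ} (hab : a ≤ b)
    (hc : ∀ i ≤ a, cumProd Γ i ≠ 0) :
    ∑ i ∈ Icc 1 (a + 1), ∑ j ∈ Icc (b + 1) m, ∏ k ∈ Icc i j, Γ k =
      headSum Γ a * tailSum m Γ b := by
  rw [headSum, tailSum, sum_mul_sum]
  refine sum_congr rfl fun i hi => sum_congr rfl fun j hj => ?_
  obtain ⟨l, rfl⟩ : ∃ l, i = l + 1 := ⟨i - 1, by have := (mem_Icc.1 hi).1; omega⟩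
  have hl : l ≤ a := by have := (mem_Icc.1 hi).2; omega
  have hlj : l ≤ j := by have := (mem_Icc.1 hj).1; omega
  rw [Nat.add_sub_cancel, ← cumProd_mul_prod_Icc (l := l) hlj, inv_mul_cancel_left₀ (hc l hl)]

theorem headSum_zero : headSum Γ 0 = 1 := by
  simp [headSum, cumProd]

theorem headSum_succ (t : ℕ) : headSum Γ (t + 1) = headSum Γ t + (cumProd Γ (t + 1))⁻¹ := by
  rw [headSum, sum_Icc_succ_top (by omega), Nat.add_sub_cancel, headSum]

theorem tailSum_eq_add {t : ℕ} (ht : t + 1 ≤ m) :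
    tailSum m Γ t = cumProd Γ (t + 1) + tailSum m Γ (t + 1) := by
  rw [tailSum, ← insert_Icc_add_one_left_eq_Icc ht, sum_insert (by simp), tailSum]

theorem headSum_nonneg {a : ℕ} (hc : ∀ i ≤ a, 0 ≤ cumProd Γ i) : 0 ≤ headSum Γ a :=
  sum_nonneg fun i hi => inv_nonneg.2 (hc _ (by rw [mem_Icc] at hi; omega))

theorem tailSum_pos (hc : ∀ i ≤ m, 0 < cumProd Γ i) {t : ℕ} (ht : t < m) :
    0 < tailSum m Γ t :=
  sum_pos (fun j hj => hc j (mem_Icc.1 hj).2) ⟨m, mem_Icc.2 ⟨ht, le_rfl⟩⟩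

theorem headSum_mul_tailSum_succ_le (hc : ∀ i ≤ m, 0 < cumProd Γ i) {t : ℕ} (ht : t + 1 < m) :
    headSum Γ t * tailSum m Γ (t + 1) ≤ headSum Γ (t + 1) * tailSum m Γ t := by
  have hct := hc (t + 1) ht.le
  have hF := headSum_nonneg (Γ := Γ) (a := t) fun i hi => (hc i (by omega)).le
  have hG := tailSum_pos hc ht
  rw [headSum_succ, tailSum_eq_add ht.le]
  have : (cumProd Γ (t + 1))⁻¹ * cumProd Γ (t + 1) = 1 := inv_mul_cancel₀ hct.ne'
  nlinarith [mul_nonneg hF hct.le, mul_nonneg (inv_nonneg.2 hct.le) hG.le]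

end DutyCycle

theorem hessian_matrix_posSemidef_general (m : ℕ) (Γ : ℕ → ℝ)
    (hΓ : ∀ k, 1 ≤ k → k ≤ m → Γ k ∈ Set.Ioc (0 : ℝ) 1) :
    Matrix.PosSemidef (Matrix.of fun a b : Fin m =>
      if a ≤ b then
        ∑ i ∈ Finset.Icc 1 (a.val + 1), ∑ j ∈ Finset.Icc (b.val + 1) m,
          ∏ k ∈ Finset.Icc i j, Γ k
      else
        ∑ i ∈ Finset.Icc 1 (b.val + 1), ∑ j ∈ Finset.Icc (a.val + 1) m,
          ∏ k ∈ Finset.Icc i j, Γ k) := by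
  have hc : ∀ i ≤ m, 0 < DutyCycle.cumProd Γ i := fun i hi =>
    prod_pos fun k hk => (hΓ k (mem_Icc.1 hk).1 ((mem_Icc.1 hk).2.trans hi)).1
  have hentry {a b : ℕ} (hab : a ≤ b) (hb : b < m) :=
    DutyCycle.sum_sum_prod_Icc_eq_headSum_mul_tailSum (m := m) hab fun i hi =>
      (hc i (by omega)).ne'
  convert Matrix.posSemidef_min_mul_max (DutyCycle.headSum Γ) (DutyCycle.tailSum m Γ)
    (DutyCycle.headSum_zero.symm ▸ zero_le_one) (fun t => DutyCycle.tailSum_pos hc)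
    (fun t => DutyCycle.headSum_mul_tailSum_succ_le hc) using 4 with a b
  split_ifs with hab
  · have hab : (a : ℕ) ≤ b := hab
    rw [min_eq_left hab, max_eq_right hab, hentry hab b.isLt]
  · have hba : (b : ℕ) ≤ a := (lt_of_not_ge hab).le
    rw [min_eq_right hba, max_eq_left hba, hentry hba a.isLt]

/-- with `m = N - 1 ≥ 1` and `Γ_1, …, Γ_m ∈ (0,1]`, the symmetric
`m × m` matrix with entries `Ĥ_{a,b} = ∑_{i=1}^{a} ∑_{j=b}^{m} ∏_{k=i}^{j} Γ_k`
for `a ≤ b` (paper's 1-based indices; here `a b : Fin m` are 0-based, so the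
paper index is `a.val + 1`) is positive semidefinite. -/
theorem hessian_matrix_posSemidef (m : ℕ) (hm : 1 ≤ m) (Γ : ℕ → ℝ)
    (hΓ : ∀ k, 1 ≤ k → k ≤ m → Γ k ∈ Set.Ioc (0 : ℝ) 1) :
    Matrix.PosSemidef (Matrix.of fun a b : Fin m =>
      if a ≤ b then
        ∑ i ∈ Finset.Icc 1 (a.val + 1), ∑ j ∈ Finset.Icc (b.val + 1) m,
          ∏ k ∈ Finset.Icc i j, Γ k
      else
        ∑ i ∈ Finset.Icc 1 (b.val + 1), ∑ j ∈ Finset.Icc (a.val + 1) m,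
          ∏ k ∈ Finset.Icc i j, Γ k) :=
  hessian_matrix_posSemidef_general m Γ hΓ
end

section
/- Fix N ≥ 4, u ∈ (0,1), λ_f > 0 and a total observation window T with T > (N−3)·(u/λ_f)·log 2. Suppose T_a, T_b > 0 satisfy e^{−λ_f T_a/u} = e^{−λ_f T_b/u}/(1 − e^{−λ_f T_b/u}) and 2·T_a + (N−3)·T_b = T. Then the inter-sample time sequence 𝒯* with T*_1 = T*_{N−1} = T_a and T*_n = T_b for 2 ≤ n ≤ N−2 minimizes V_{ũ_a,N}(𝒯) over all 𝒯 = (T_1,…,T_{N−1}) with T_n ≥ 0 for all n and ∑_{n=1}^{N−1} T_n = T; that is, V_{ũ_a,N}(𝒯*) ≤ V_{ũ_a,N}(𝒯) for every such feasible 𝒯. -/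
/-!
With `x m = λ_f T m / u`, the error `V` is an increasing affine function of the convex function
`F x = ∑_{1 ≤ a ≤ b ≤ N-1} exp (-(x a + ⋯ + x b))`. The tangent bound
`exp (-Y) ≥ exp (-X) (1 + X - Y)` shows that a point where all partial derivatives `∂F/∂x m`
coincide minimises `F` on its hyperplane `∑ x m = const`. For the candidate, with
`exp (-x m) = p / (1 - p)` at both ends and `p` in between, the intervals through every `m`
contribute `p / (1 - p) ^ 2` in total.
-/

open Finset

open Real

section IntervalSums

variable {R : Type*}

lemma sum_windows_eq_sum_intervals [AddCommMonoid R] (M : ℕ) (F : ℕ → ℕ → R) :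
    ∑ i ∈ Icc 1 M, ∑ j ∈ Icc 1 (M + 1 - i), F j (i + j - 1)
      = ∑ a ∈ Icc 1 M, ∑ b ∈ Icc a M, F a b := by
  rw [sum_comm' (t' := Icc 1 M) (s' := fun j => Icc 1 (M + 1 - j))
    (by intro i j; simp only [mem_Icc]; omega)]
  refine sum_congr rfl fun a ha => ?_
  rw [mem_Icc] at ha
  refine sum_nbij' (fun i => i + a - 1) (fun b => b + 1 - a) ?_ ?_ ?_ ?_ fun _ _ => rfl
  all_goals intro i hi; simp only [mem_Icc] at hi ⊢; omega

lemma sum_intervals_sum_Icc_comm [AddCommMonoid R] (M : ℕ) (F : ℕ → ℕ → ℕ → R) :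
    ∑ a ∈ Icc 1 M, ∑ b ∈ Icc a M, ∑ m ∈ Icc a b, F a b m
      = ∑ m ∈ Icc 1 M, ∑ a ∈ Icc 1 m, ∑ b ∈ Icc m M, F a b m :=
  calc _ = ∑ a ∈ Icc 1 M, ∑ m ∈ Icc a M, ∑ b ∈ Icc m M, F a b m :=
        sum_congr rfl fun _ _ => sum_comm' (by intro b m; simp only [mem_Icc]; omega)
    _ = _ := sum_comm' (by intro a m; simp only [mem_Icc]; omega)

variable [CommSemiring R] (e : ℕ → R)

lemma sum_sum_prod_Icc_eq_mul (k M : ℕ) :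
    ∑ a ∈ Icc 1 k, ∑ b ∈ Icc k M, ∏ m ∈ Icc a b, e m
      = (∑ a ∈ Icc 1 k, ∏ m ∈ Icc a k, e m) *
          ∑ b ∈ Icc k M, ∏ m ∈ Icc (k + 1) b, e m := by
  rw [sum_mul_sum]
  refine sum_congr rfl fun a ha => sum_congr rfl fun b hb => ?_
  rw [mem_Icc] at ha hb
  rw [← prod_union (disjoint_left.2 fun m h h' => by simp only [mem_Icc] at h h'; omega)]
  congr 1
  ext m
  simp only [mem_union, mem_Icc]
  omega

lemma sum_prod_Icc_add_one_right (k : ℕ) :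
    ∑ a ∈ Icc 1 (k + 1), ∏ m ∈ Icc a (k + 1), e m
      = (∑ a ∈ Icc 1 k, ∏ m ∈ Icc a k, e m + 1) * e (k + 1) := by
  rw [sum_Icc_succ_top (by omega), Icc_self, prod_singleton, add_mul, one_mul, sum_mul]
  congr 1
  exact sum_congr rfl fun a ha => prod_Icc_succ_top (by rw [mem_Icc] at ha; omega) e

lemma sum_prod_Icc_add_one_left {k M : ℕ} (hkM : k < M) :
    ∑ b ∈ Icc k M, ∏ m ∈ Icc (k + 1) b, e m
      = 1 + e (k + 1) * ∑ b ∈ Icc (k + 1) M, ∏ m ∈ Icc (k + 2) b, e m := by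
  rw [← insert_Icc_add_one_left_eq_Icc hkM.le, sum_insert (by simp),
    Icc_eq_empty (by omega), prod_empty, mul_sum]
  congr 1
  refine sum_congr rfl fun b hb => ?_
  rw [← insert_Icc_add_one_left_eq_Icc (mem_Icc.1 hb).1, prod_insert (by simp)]
  rfl

end IntervalSums

def endpointProfile {α : Type*} (M : ℕ) (s t : α) (m : ℕ) : α :=
  if m = 1 ∨ m = M then s else t

lemma sum_endpointProfile {R : Type*} [CommRing R] {M : ℕ} (hM : 2 ≤ M) (s t : R) :
    ∑ m ∈ Icc 1 M, endpointProfile M s t m = 2 * s + ((M : R) - 2) * t := by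
  obtain ⟨n, rfl⟩ : ∃ n, M = n + 2 := ⟨M - 2, by omega⟩
  rw [sum_Icc_succ_top (by omega), ← insert_Icc_add_one_left_eq_Icc (by omega),
    sum_insert (by simp), sum_congr rfl fun m hm =>
      show endpointProfile (n + 2) s t m = t from if_neg (by rw [mem_Icc] at hm; omega),
    sum_const, Nat.card_Icc, nsmul_eq_mul, endpointProfile, if_pos (Or.inl rfl), endpointProfile,
    if_pos (Or.inr rfl), show n + 1 + 1 - (1 + 1) = n by omega]
  push_cast
  ring

section EndpointProfile

variable {K : Type*} [Field K] {p : K} (hp : p ≠ 1)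
include hp

lemma sum_prod_endpointProfile_left {k M : ℕ} (hk : 1 ≤ k) (hkM : k < M) :
    ∑ a ∈ Icc 1 k, ∏ m ∈ Icc a k, endpointProfile M (p / (1 - p)) p m = p / (1 - p) := by
  have h1p : 1 - p ≠ 0 := sub_ne_zero.2 hp.symm
  induction k, hk using Nat.le_induction with
  | base => simp [endpointProfile]
  | succ k hk ih =>
    rw [sum_prod_Icc_add_one_right, ih (by omega), endpointProfile, if_neg (by omega)]
    field_simp
    ring

lemma sum_prod_endpointProfile_left_self {M : ℕ} (hM : 2 ≤ M) :
    ∑ a ∈ Icc 1 M, ∏ m ∈ Icc a M, endpointProfile M (p / (1 - p)) p m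
      = p / (1 - p) ^ 2 := by
  have h1p : 1 - p ≠ 0 := sub_ne_zero.2 hp.symm
  obtain ⟨n, rfl⟩ : ∃ n, M = n + 1 := ⟨M - 1, by omega⟩
  rw [sum_prod_Icc_add_one_right, sum_prod_endpointProfile_left hp (by omega) (by omega),
    endpointProfile, if_pos (Or.inr rfl)]
  field_simp
  ring

lemma sum_prod_endpointProfile_right {k M : ℕ} (hk : 1 ≤ k) (hkM : k < M) :
    ∑ b ∈ Icc k M, ∏ m ∈ Icc (k + 1) b, endpointProfile M (p / (1 - p)) p m
      = 1 / (1 - p) := by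
  have h1p : 1 - p ≠ 0 := sub_ne_zero.2 hp.symm
  obtain ⟨d, hd⟩ : ∃ d, M = k + 1 + d := ⟨M - k - 1, by omega⟩
  induction d generalizing k with
  | zero =>
    subst hd
    rw [sum_prod_Icc_add_one_left _ hkM, Icc_self, sum_singleton, Icc_eq_empty (by omega),
      prod_empty, endpointProfile, if_pos (Or.inr rfl)]
    field_simp
    ring
  | succ d ih =>
    rw [sum_prod_Icc_add_one_left _ hkM, ih (by omega) (by omega) (by omega), endpointProfile,
      if_neg (by omega)]
    field_simp
    ring

lemma sum_sum_prod_endpointProfile {k M : ℕ} (hM : 2 ≤ M) (hk : 1 ≤ k) (hkM : k ≤ M) :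
    ∑ a ∈ Icc 1 k, ∑ b ∈ Icc k M, ∏ m ∈ Icc a b, endpointProfile M (p / (1 - p)) p m
      = p / (1 - p) ^ 2 := by
  rw [sum_sum_prod_Icc_eq_mul]
  rcases hkM.lt_or_eq with hkM | rfl
  · rw [sum_prod_endpointProfile_left hp hk hkM, sum_prod_endpointProfile_right hp hk hkM]
    field_simp
  · rw [sum_prod_endpointProfile_left_self hp hM, Icc_self, sum_singleton,
      Icc_eq_empty (by omega), prod_empty, mul_one]

end EndpointProfile

noncomputable def intervalExpSum (M : ℕ) (x : ℕ → ℝ) : ℝ :=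
  ∑ a ∈ Icc 1 M, ∑ b ∈ Icc a M, ∏ m ∈ Icc a b, exp (-x m)

/-- Equals `-∂(intervalExpSum M x)/∂(x k)` for `1 ≤ k ≤ M`. -/
noncomputable def coveringExpSum (M : ℕ) (x : ℕ → ℝ) (k : ℕ) : ℝ :=
  ∑ a ∈ Icc 1 k, ∑ b ∈ Icc k M, ∏ m ∈ Icc a b, exp (-x m)

lemma prod_exp_neg_mul_one_add_sum_sub_le (s : Finset ℕ) (x y : ℕ → ℝ) :
    (∏ m ∈ s, exp (-x m)) * (1 + ∑ m ∈ s, (x m - y m)) ≤ ∏ m ∈ s, exp (-y m) := by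
  simp only [← exp_sum, sum_neg_distrib, sum_sub_distrib]
  calc exp (-∑ m ∈ s, x m) * (1 + (∑ m ∈ s, x m - ∑ m ∈ s, y m))
      ≤ exp (-∑ m ∈ s, x m) * exp (∑ m ∈ s, x m - ∑ m ∈ s, y m) := by
        gcongr
        linarith [add_one_le_exp (∑ m ∈ s, x m - ∑ m ∈ s, y m)]
    _ = exp (-∑ m ∈ s, y m) := by rw [← exp_add]; ring_nf

lemma intervalExpSum_add_sum_coveringExpSum_mul_le (M : ℕ) (x y : ℕ → ℝ) :
    intervalExpSum M x + ∑ m ∈ Icc 1 M, coveringExpSum M x m * (x m - y m)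
      ≤ intervalExpSum M y := by
  calc _ = ∑ a ∈ Icc 1 M, ∑ b ∈ Icc a M,
        (∏ m ∈ Icc a b, exp (-x m)) * (1 + ∑ m ∈ Icc a b, (x m - y m)) := by
        simp only [intervalExpSum, coveringExpSum, mul_add, mul_one, sum_add_distrib, mul_sum,
          sum_mul, sum_intervals_sum_Icc_comm M
            fun a b m => (∏ k ∈ Icc a b, exp (-x k)) * (x m - y m)]
    _ ≤ intervalExpSum M y :=
        sum_le_sum fun a _ => sum_le_sum fun b _ => prod_exp_neg_mul_one_add_sum_sub_le _ x y

theorem intervalExpSum_le_of_coveringExpSum_eq {M : ℕ} {x y : ℕ → ℝ} {c : ℝ}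
    (hc : ∀ m ∈ Icc 1 M, coveringExpSum M x m = c)
    (hxy : ∑ m ∈ Icc 1 M, y m = ∑ m ∈ Icc 1 M, x m) :
    intervalExpSum M x ≤ intervalExpSum M y := by
  have := intervalExpSum_add_sum_coveringExpSum_mul_le M x y
  rwa [sum_congr rfl fun m hm => by rw [hc m hm], ← mul_sum, sum_sub_distrib, hxy, sub_self,
    mul_zero, add_zero] at this

lemma Vavg_add_one (u lf : ℝ) (M : ℕ) (T : ℕ → ℝ) :
    Vavg u lf (M + 1) T = u * (1 - u) / ((M + 1 : ℕ) : ℝ)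
      + 2 * u * (1 - u) / ((M + 1 : ℕ) : ℝ) ^ 2 * intervalExpSum M (fun m => lf * T m / u) := by
  simp only [Vavg, intervalExpSum, Nat.add_sub_cancel, neg_div]
  rw [sum_windows_eq_sum_intervals M fun a b => ∏ m ∈ Icc a b, exp (-(lf * T m / u))]

theorem optimal_intersample_times_general (N : ℕ) (hN : 4 ≤ N) (u lf : ℝ)
    (hu : 0 < u) (hu1 : u < 1) (hlf : 0 < lf) (T Ta Tb : ℝ)
    (hTb : 0 < Tb)
    (hgamma : Real.exp (-(lf * Ta) / u)
      = Real.exp (-(lf * Tb) / u) / (1 - Real.exp (-(lf * Tb) / u)))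
    (hsum : 2 * Ta + ((N : ℝ) - 3) * Tb = T) :
    ∀ T' : ℕ → ℝ, (∀ k, 0 ≤ T' k) → (∑ k ∈ Finset.Icc 1 (N - 1), T' k = T) →
      Vavg u lf N (fun k => if k = 1 ∨ k = N - 1 then Ta else Tb) ≤ Vavg u lf N T' := by
  intro T' _ hT'sum
  obtain ⟨M, rfl⟩ : ∃ M, N = M + 1 := ⟨N - 1, by omega⟩
  simp only [Nat.add_sub_cancel] at hT'sum ⊢
  set p := exp (-(lf * Tb) / u)
  have hp : p ≠ 1 :=
    (exp_lt_one_iff.2 (div_neg_of_neg_of_pos (neg_neg_of_pos (mul_pos hlf hTb)) hu)).ne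
  have hprofile : ∀ m, exp (-(lf * endpointProfile M Ta Tb m / u))
      = endpointProfile M (p / (1 - p)) p m := by
    intro m
    unfold endpointProfile
    split_ifs <;> simp only [← neg_div, hgamma, p]
  change Vavg u lf (M + 1) (endpointProfile M Ta Tb) ≤ _
  rw [Vavg_add_one, Vavg_add_one]
  gcongr
  refine intervalExpSum_le_of_coveringExpSum_eq (c := p / (1 - p) ^ 2) (fun m hm => ?_) ?_
  · rw [mem_Icc] at hm
    simp only [coveringExpSum, hprofile]
    exact sum_sum_prod_endpointProfile hp (by omega) hm.1 hm.2
  · simp only [← sum_div, ← mul_sum, hT'sum, sum_endpointProfile (by omega : 2 ≤ M),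
      ← hsum]
    push_cast
    ring

/-- optimality of the inter-sample time sequence with
`T*_1 = T*_{N-1} = T_a` and `T*_n = T_b` otherwise, when
`e^{-λ_f T_a/u} = e^{-λ_f T_b/u} / (1 - e^{-λ_f T_b/u})`,
`2 T_a + (N-3) T_b = T` and `T > (N-3)(u/λ_f) log 2`. -/
theorem optimal_intersample_times (N : ℕ) (hN : 4 ≤ N) (u lf : ℝ)
    (hu : 0 < u) (hu1 : u < 1) (hlf : 0 < lf) (T Ta Tb : ℝ)
    (hTwin : ((N : ℝ) - 3) * (u / lf) * Real.log 2 < T)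
    (hTa : 0 < Ta) (hTb : 0 < Tb)
    (hgamma : Real.exp (-(lf * Ta) / u)
      = Real.exp (-(lf * Tb) / u) / (1 - Real.exp (-(lf * Tb) / u)))
    (hsum : 2 * Ta + ((N : ℝ) - 3) * Tb = T) :
    ∀ T' : ℕ → ℝ, (∀ k, 0 ≤ T' k) → (∑ k ∈ Finset.Icc 1 (N - 1), T' k = T) →
      Vavg u lf N (fun k => if k = 1 ∨ k = N - 1 then Ta else Tb) ≤ Vavg u lf N T' :=
  optimal_intersample_times_general N hN u lf hu hu1 hlf T Ta Tb hTb hgamma hsum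
end

section
/- Fix u ∈ (0,1), λ_f > 0 and a total observation window T > 0. For N ≥ 2 let Γ_c(N) = e^{−λ_f T/((N−1)·u)} (uniform sampling of N samples over window T), and let V*_N = u(1−u)(1+Γ_c(N))/(N(1−Γ_c(N))+2Γ_c(N)) be the mean squared error of the optimally weighted averaging estimator. Then lim_{N→∞} V*_N = u(1−u)/(1 + λ_f T/(2u)). -/
open Filter Topology Real

/-! The correlation factor tends to `1` like `1 - a/x` with `a = λ_f T / u` and `x = N - 1`, so
`N (1 - Γ_c) → a` (the derivative of `exp` at `0`), and the mean squared error tends to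
`2 u (1 - u) / (a + 2)`. -/

lemma tendsto_exp_neg_div_atTop (a : ℝ) : Tendsto (fun x : ℝ => exp (-a / x)) atTop (𝓝 1) := by
  simpa [Function.comp_def] using
    (continuous_exp.tendsto 0).comp (tendsto_const_nhds.div_atTop tendsto_id)

lemma tendsto_mul_one_sub_exp_neg_div_atTop (a : ℝ) :
    Tendsto (fun x : ℝ => x * (1 - exp (-a / x))) atTop (𝓝 a) := by
  have hderiv : HasDerivAt (fun t : ℝ => 1 - exp (-a * t)) a 0 := by
    simpa using ((hasDerivAt_id (0 : ℝ)).const_mul (-a)).exp.const_sub 1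
  have hinv : Tendsto (fun x : ℝ => x⁻¹) atTop (𝓝[≠] 0) :=
    tendsto_inv_atTop_nhdsGT_zero.mono_right (nhdsWithin_mono _ fun _ hx => ne_of_gt hx)
  -- the difference quotient of `t ↦ 1 - exp (-a t)` at `0`, evaluated at `t = x⁻¹`
  refine (hderiv.tendsto_slope_zero.comp hinv).congr fun x => ?_
  simp [div_eq_mul_inv]

lemma tendsto_add_one_mul_one_sub_exp_neg_div_atTop (a : ℝ) :
    Tendsto (fun x : ℝ => (x + 1) * (1 - exp (-a / x))) atTop (𝓝 a) := by
  have h := (tendsto_mul_one_sub_exp_neg_div_atTop a).add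
    ((tendsto_const_nhds (x := (1 : ℝ))).sub (tendsto_exp_neg_div_atTop a))
  simpa [add_one_mul] using h

lemma tendsto_weighted_mse_atTop (c a : ℝ) (ha : a + 2 ≠ 0) :
    Tendsto (fun x : ℝ => c * (1 + exp (-a / x)) /
        ((x + 1) * (1 - exp (-a / x)) + 2 * exp (-a / x))) atTop (𝓝 (2 * c / (a + 2))) := by
  have hΓ := tendsto_exp_neg_div_atTop a
  have hnum := (tendsto_const_nhds (x := c)).mul ((tendsto_const_nhds (x := (1 : ℝ))).add hΓ)
  have hden := (tendsto_add_one_mul_one_sub_exp_neg_div_atTop a).add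
    ((tendsto_const_nhds (x := (2 : ℝ))).mul hΓ)
  rw [show 2 * c / (a + 2) = c * (1 + 1) / (a + 2 * 1) by ring]
  exact hnum.div hden (by simpa using ha)

theorem weighted_estimator_mse_limit_general (u lf T : ℝ)
    (hu : 0 < u) (hlf : 0 < lf) (hT : 0 < T) :
    Filter.Tendsto
      (fun N : ℕ =>
        u * (1 - u) * (1 + Real.exp (-(lf * T) / (((N : ℝ) - 1) * u)))
          / ((N : ℝ) * (1 - Real.exp (-(lf * T) / (((N : ℝ) - 1) * u)))
              + 2 * Real.exp (-(lf * T) / (((N : ℝ) - 1) * u))))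
      Filter.atTop
      (nhds (u * (1 - u) / (1 + lf * T / (2 * u)))) := by
  have hspacing : Tendsto (fun N : ℕ => (N : ℝ) - 1) atTop atTop :=
    tendsto_atTop_add_const_right _ _ tendsto_natCast_atTop_atTop
  have h := (tendsto_weighted_mse_atTop (u * (1 - u)) (lf * T / u) (by positivity)).comp hspacing
  have hexponent : ∀ N : ℕ, -(lf * T) / (((N : ℝ) - 1) * u) = -(lf * T / u) / ((N : ℝ) - 1) :=
    fun N => by rw [neg_div, neg_div, div_mul_eq_div_div_swap]
  convert h using 2
  · simp [hexponent]
  · field_simp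
    ring

/-- as the number of samples `N → ∞` over a fixed observation
window `T` (uniform sampling, `Γ_c(N) = e^{-λ_f T/((N-1)u)}`), the mean squared
error of the optimally weighted averaging estimator,
`V*_N = u(1-u)(1+Γ_c(N))/(N(1-Γ_c(N))+2Γ_c(N))`, tends to
`u(1-u)/(1 + λ_f T/(2u))`. -/
theorem weighted_estimator_mse_limit (u lf T : ℝ)
    (hu : 0 < u) (hu1 : u < 1) (hlf : 0 < lf) (hT : 0 < T) :
    Filter.Tendsto
      (fun N : ℕ =>
        u * (1 - u) * (1 + Real.exp (-(lf * T) / (((N : ℝ) - 1) * u)))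
          / ((N : ℝ) * (1 - Real.exp (-(lf * T) / (((N : ℝ) - 1) * u)))
              + 2 * Real.exp (-(lf * T) / (((N : ℝ) - 1) * u))))
      Filter.atTop
      (nhds (u * (1 - u) / (1 + lf * T / (2 * u)))) :=
  weighted_estimator_mse_limit_general u lf T hu hlf hT
end

section
/- For the PU on–off sampling model under uniform sampling with Γ_c = e^{−λ_f T_c/u} and sensing-error probabilities P_f, P_m ∈ [0,1] with P_f + P_m ≠ 1, let w̃_1,…,w̃_N be real weights with ∑_{i=1}^{N} w̃_i = 1 and define the estimator ũ_{w,s}(z̃) = (1/(1−P_f−P_m))·(−P_f + ∑_{i=1}^{N} w̃_i z̃_i). Then its mean squared error satisfies V_{ũ_{w,s},N} := ∑_{z̃ ∈ {0,1}^N} (ũ_{w,s}(z̃) − u)² P̃(z̃) = ((u·P_m(1−P_m) + (1−u)·P_f(1−P_f)) / (1−P_f−P_m)²)·∑_{i=1}^{N} w̃_i² + u(1−u)·( ∑_{i=1}^{N} w̃_i² + 2·∑_{j=1}^{N−1} Γ_c^{j} · ∑_{i=1}^{N−j} w̃_i w̃_{i+j} ). -/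
open Finset

noncomputable def tpAux (u γ : ℝ) : Bool → Bool → ℝ
  | false, false => 1 - u + u * γ
  | false, true  => u - u * γ
  | true,  true  => u + (1 - u) * γ
  | true,  false => (1 - u) - (1 - u) * γ

noncomputable def pibAux (u : ℝ) : Bool → ℝ := fun b => if b then u else 1 - u

noncomputable def indAux : Bool → ℝ := fun b => if b then 1 else 0

noncomputable def chainPAux (u γ : ℝ) {n : ℕ} (z : Fin (n + 1) → Bool) : ℝ :=
  pibAux u (z 0) * ∏ k : Fin n, tpAux u γ (z k.castSucc) (z k.succ)

lemma tpAux_rowsum (u γ : ℝ) (a : Bool) : tpAux u γ a false + tpAux u γ a true = 1 := by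
  cases a <;> (simp [tpAux]; try ring)

lemma sum_snoc_bool {n : ℕ} (H : (Fin (n + 1) → Bool) → ℝ) :
    ∑ z : Fin (n + 1) → Bool, H z
      = ∑ z : Fin n → Bool, ∑ b : Bool, H (Fin.snoc z b) := by
  rw [show (∑ z : Fin n → Bool, ∑ b : Bool, H (Fin.snoc z b))
      = ∑ p : (Fin n → Bool) × Bool, H (Fin.snoc p.1 p.2) from (Fintype.sum_prod_type (f := fun p => H (Fin.snoc p.1 p.2))).symm]
  exact (Fintype.sum_equiv
    (⟨fun p => Fin.snoc p.1 p.2, fun z => (Fin.init z, z (Fin.last n)),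
      fun p => by simp, fun z => by simp⟩ :
        ((Fin n → Bool) × Bool) ≃ (Fin (n + 1) → Bool))
    (fun p => H (Fin.snoc p.1 p.2)) H (fun p => rfl)).symm

lemma chainPAux_snoc (u γ : ℝ) {n : ℕ} (z : Fin (n + 1) → Bool) (b : Bool) :
    chainPAux u γ (Fin.snoc z b) = chainPAux u γ z * tpAux u γ (z (Fin.last n)) b := by
  unfold chainPAux
  rw [Fin.prod_univ_castSucc]
  have h0 : (Fin.snoc z b : Fin (n + 2) → Bool) 0 = z 0 := by
    have : (0 : Fin (n + 2)) = Fin.castSucc 0 := rfl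
    rw [this, Fin.snoc_castSucc]
  have hlast : (Fin.last n).succ = Fin.last (n + 1) := by
    ext; simp
  rw [h0]
  have hfac : ∀ k : Fin n,
      tpAux u γ ((Fin.snoc z b : Fin (n+2) → Bool) (Fin.castSucc k).castSucc)
          ((Fin.snoc z b : Fin (n+2) → Bool) (Fin.castSucc k).succ)
        = tpAux u γ (z k.castSucc) (z k.succ) := by
    intro k
    rw [Fin.succ_castSucc, Fin.snoc_castSucc, Fin.snoc_castSucc]
  rw [Finset.prod_congr rfl (fun k _ => hfac k), Fin.snoc_castSucc, hlast, Fin.snoc_last]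
  ring

lemma snoc_mk_lt {n : ℕ} (z : Fin (n + 1) → Bool) (b : Bool) (i : ℕ)
    (hi2 : i < n + 2) (hi : i < n + 1) :
    (Fin.snoc z b : Fin (n + 2) → Bool) ⟨i, hi2⟩ = z ⟨i, hi⟩ := by
  have h : (⟨i, hi2⟩ : Fin (n + 2)) = Fin.castSucc ⟨i, hi⟩ := rfl
  rw [h, Fin.snoc_castSucc]

lemma snoc_mk_last {n : ℕ} (z : Fin (n + 1) → Bool) (b : Bool) (h : n + 1 < n + 2) :
    (Fin.snoc z b : Fin (n + 2) → Bool) ⟨n + 1, h⟩ = b := by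
  have h2 : (⟨n + 1, h⟩ : Fin (n + 2)) = Fin.last (n + 1) := rfl
  rw [h2, Fin.snoc_last]

lemma tp_absorb (u γ1 γ2 : ℝ) (f g : Bool → ℝ) :
    (∑ a : Bool, ∑ b : Bool, pibAux u a * (tpAux u γ1 a b *
        (f a * (tpAux u γ2 b false * g false + tpAux u γ2 b true * g true))))
    = ∑ a : Bool, ∑ b : Bool, pibAux u a * (tpAux u (γ1 * γ2) a b * (f a * g b)) := by
  simp [Fintype.sum_bool, tpAux, pibAux]; ring

lemma tp_diag_last (u γ : ℝ) (f g : Bool → ℝ) :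
    (∑ a : Bool, ∑ b : Bool, pibAux u a * (tpAux u 1 a b *
      ((1 : ℝ) * (tpAux u γ b false * (f false * g false)
        + tpAux u γ b true * (f true * g true)))))
    = ∑ a : Bool, ∑ b : Bool, pibAux u a * (tpAux u 1 a b * (f a * g b)) := by
  simp [Fintype.sum_bool, tpAux, pibAux]; ring

lemma chainP_pair (u γ : ℝ) :
    ∀ (n i j : ℕ) (hi : i < n + 1) (hj : j < n + 1), i ≤ j → ∀ f g : Bool → ℝ,
    (∑ z : Fin (n + 1) → Bool, chainPAux u γ z * (f (z ⟨i, hi⟩) * g (z ⟨j, hj⟩)))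
      = ∑ a : Bool, ∑ b : Bool,
          pibAux u a * (tpAux u (γ ^ (j - i)) a b * (f a * g b)) := by
  intro n
  induction n with
  | zero =>
    intro i j hi hj hij f g
    have hi0 : i = 0 := by omega
    have hj0 : j = 0 := by omega
    subst hi0; subst hj0
    rw [← Equiv.sum_comp (Equiv.funUnique (Fin 1) Bool).symm]
    simp [chainPAux, pibAux, Fintype.sum_bool, tpAux, Equiv.funUnique]
    try ring
  | succ n ih =>
    intro i j hi hj hij f g
    rw [sum_snoc_bool]
    by_cases hjn : j < n + 1
    · have hin : i < n + 1 := lt_of_le_of_lt hij hjn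
      have hstep : ∀ z : Fin (n + 1) → Bool,
          (∑ b : Bool, chainPAux u γ (Fin.snoc z b) *
            (f ((Fin.snoc z b : Fin (n + 2) → Bool) ⟨i, hi⟩) *
              g ((Fin.snoc z b : Fin (n + 2) → Bool) ⟨j, hj⟩)))
          = chainPAux u γ z * (f (z ⟨i, hin⟩) * g (z ⟨j, hjn⟩)) := by
        intro z
        have hb : ∀ b : Bool, chainPAux u γ (Fin.snoc z b) *
            (f ((Fin.snoc z b : Fin (n + 2) → Bool) ⟨i, hi⟩) *
              g ((Fin.snoc z b : Fin (n + 2) → Bool) ⟨j, hj⟩))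
            = (chainPAux u γ z * (f (z ⟨i, hin⟩) * g (z ⟨j, hjn⟩)))
                * tpAux u γ (z (Fin.last n)) b := by
          intro b
          rw [chainPAux_snoc, snoc_mk_lt z b i hi hin, snoc_mk_lt z b j hj hjn]
          ring
        rw [Fintype.sum_congr _ _ hb, ← Finset.mul_sum]
        have h1 : (∑ b : Bool, tpAux u γ (z (Fin.last n)) b) = 1 := by
          rw [Fintype.sum_bool, add_comm]; exact tpAux_rowsum u γ _
        rw [h1, mul_one]
      rw [Finset.sum_congr rfl (fun z _ => hstep z)]
      exact ih i j hin hjn hij f g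
    · have hj1 : j = n + 1 := by omega
      subst hj1
      by_cases hin : i < n + 1
      · set g' : Bool → ℝ :=
          fun x => tpAux u γ x false * g false + tpAux u γ x true * g true with hg'
        have hstep : ∀ z : Fin (n + 1) → Bool,
            (∑ b : Bool, chainPAux u γ (Fin.snoc z b) *
              (f ((Fin.snoc z b : Fin (n + 2) → Bool) ⟨i, hi⟩) *
                g ((Fin.snoc z b : Fin (n + 2) → Bool) ⟨n + 1, hj⟩)))
            = chainPAux u γ z * (f (z ⟨i, hin⟩) * g' (z (Fin.last n))) := by
          intro z
          have hb : ∀ b : Bool, chainPAux u γ (Fin.snoc z b) *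
              (f ((Fin.snoc z b : Fin (n + 2) → Bool) ⟨i, hi⟩) *
                g ((Fin.snoc z b : Fin (n + 2) → Bool) ⟨n + 1, hj⟩))
              = (chainPAux u γ z * f (z ⟨i, hin⟩))
                  * (tpAux u γ (z (Fin.last n)) b * g b) := by
            intro b
            rw [chainPAux_snoc, snoc_mk_lt z b i hi hin, snoc_mk_last]
            ring
          rw [Fintype.sum_congr _ _ hb, ← Finset.mul_sum, Fintype.sum_bool]
          simp only [hg']
          ring
        rw [Finset.sum_congr rfl (fun z _ => hstep z)]
        rw [show (Fin.last n) = (⟨n, Nat.lt_succ_self n⟩ : Fin (n + 1)) from rfl]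
        rw [ih i n hin (Nat.lt_succ_self n) (by omega) f g']
        rw [hg']
        rw [tp_absorb u (γ ^ (n - i)) γ f g]
        have hpow : γ ^ (n - i) * γ = γ ^ (n + 1 - i) := by
          rw [← pow_succ]
          congr 1
          omega
        rw [hpow]
      · have hi1 : i = n + 1 := by omega
        subst hi1
        set h' : Bool → ℝ :=
          fun x => tpAux u γ x false * (f false * g false)
            + tpAux u γ x true * (f true * g true) with hh'
        have hstep : ∀ z : Fin (n + 1) → Bool,
            (∑ b : Bool, chainPAux u γ (Fin.snoc z b) *
              (f ((Fin.snoc z b : Fin (n + 2) → Bool) ⟨n + 1, hi⟩) *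
                g ((Fin.snoc z b : Fin (n + 2) → Bool) ⟨n + 1, hj⟩)))
            = chainPAux u γ z *
                ((fun _ : Bool => (1 : ℝ)) (z (Fin.last n)) * h' (z (Fin.last n))) := by
          intro z
          have hb : ∀ b : Bool, chainPAux u γ (Fin.snoc z b) *
              (f ((Fin.snoc z b : Fin (n + 2) → Bool) ⟨n + 1, hi⟩) *
                g ((Fin.snoc z b : Fin (n + 2) → Bool) ⟨n + 1, hj⟩))
              = chainPAux u γ z * (tpAux u γ (z (Fin.last n)) b * (f b * g b)) := by
            intro b
            rw [chainPAux_snoc, snoc_mk_last z b hi]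
            try rw [snoc_mk_last z b hj]
            ring
          rw [Fintype.sum_congr _ _ hb, ← Finset.mul_sum, Fintype.sum_bool]
          simp only [hh']
          ring
        rw [Finset.sum_congr rfl (fun z _ => hstep z)]
        rw [show (Fin.last n) = (⟨n, Nat.lt_succ_self n⟩ : Fin (n + 1)) from rfl]
        rw [ih n n (Nat.lt_succ_self n) (Nat.lt_succ_self n) le_rfl (fun _ => (1 : ℝ)) h']
        simp only [Nat.sub_self, pow_zero]
        rw [hh']
        exact tp_diag_last u γ f g

lemma sum_prod_bool : ∀ (n : ℕ) (F : Fin n → Bool → ℝ),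
    (∑ z : Fin n → Bool, ∏ k, F k (z k)) = ∏ k, (F k false + F k true) := by
  intro n
  induction n with
  | zero =>
    intro F
    simp
  | succ n ih =>
    intro F
    rw [sum_snoc_bool]
    have hz : ∀ (z : Fin n → Bool) (b : Bool),
        (∏ k : Fin (n + 1), F k ((Fin.snoc z b : Fin (n + 1) → Bool) k))
        = (∏ k : Fin n, F k.castSucc (z k)) * F (Fin.last n) b := by
      intro z b
      rw [Fin.prod_univ_castSucc]
      simp
    have hsum : ∀ z : Fin n → Bool,
        (∑ b : Bool, ∏ k : Fin (n + 1), F k ((Fin.snoc z b : Fin (n + 1) → Bool) k))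
        = (∏ k : Fin n, F k.castSucc (z k)) * (F (Fin.last n) false + F (Fin.last n) true) := by
      intro z
      rw [Fintype.sum_congr _ _ (hz z), ← Finset.mul_sum, Fintype.sum_bool]
      ring
    rw [Finset.sum_congr rfl (fun z _ => hsum z), ← Finset.sum_mul,
      ih (fun k => F k.castSucc), Fin.prod_univ_castSucc]

noncomputable def muAux (Pf Pm m : ℝ) (b : Bool) : ℝ :=
  senseErr Pf Pm false b * (indAux false - m) + senseErr Pf Pm true b * (indAux true - m)

noncomputable def nuAux (Pf Pm m : ℝ) (b : Bool) : ℝ :=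
  senseErr Pf Pm false b * ((indAux false - m) * (indAux false - m))
    + senseErr Pf Pm true b * ((indAux true - m) * (indAux true - m))

lemma senseErr_colsum (Pf Pm : ℝ) (b : Bool) :
    senseErr Pf Pm false b + senseErr Pf Pm true b = 1 := by
  cases b <;> (simp [senseErr]; try ring)

lemma muAux_eq (u Pf Pm : ℝ) (b : Bool) :
    muAux Pf Pm (Pf + u * (1 - Pf - Pm)) b = (1 - Pf - Pm) * (indAux b - u) := by
  cases b <;> (simp [muAux, senseErr, indAux]; ring)

lemma kernel_pair (Pf Pm m : ℝ) {n : ℕ} (z : Fin (n + 1) → Bool) (i j : Fin (n + 1)) :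
    (∑ zt : Fin (n + 1) → Bool,
      ((indAux (zt i) - m) * (indAux (zt j) - m)) * ∏ k, senseErr Pf Pm (zt k) (z k))
    = if i = j then nuAux Pf Pm m (z i)
      else muAux Pf Pm m (z i) * muAux Pf Pm m (z j) := by
  by_cases hij : i = j
  · subst hij
    rw [if_pos rfl]
    have hpt : ∀ zt : Fin (n + 1) → Bool,
        ((indAux (zt i) - m) * (indAux (zt i) - m)) * ∏ k, senseErr Pf Pm (zt k) (z k)
        = ∏ k, (senseErr Pf Pm (zt k) (z k) *
            (if k = i then (indAux (zt k) - m) * (indAux (zt k) - m) else 1)) := by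
      intro zt
      rw [Finset.prod_mul_distrib, Finset.prod_ite_eq' Finset.univ i
        (fun k => (indAux (zt k) - m) * (indAux (zt k) - m))]
      simp [mul_comm]
    rw [Finset.sum_congr rfl (fun zt _ => hpt zt),
      sum_prod_bool (n + 1) (fun k a => senseErr Pf Pm a (z k) *
        (if k = i then (indAux a - m) * (indAux a - m) else 1))]
    have hfac : ∀ k : Fin (n + 1),
        (senseErr Pf Pm false (z k) * (if k = i then (indAux false - m) * (indAux false - m) else 1)
          + senseErr Pf Pm true (z k) * (if k = i then (indAux true - m) * (indAux true - m) else 1))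
        = if k = i then nuAux Pf Pm m (z k) else 1 := by
      intro k
      by_cases hk : k = i
      · simp [hk, nuAux]
      · simp [hk, senseErr_colsum]
    rw [Finset.prod_congr rfl (fun k _ => hfac k),
      Finset.prod_ite_eq' Finset.univ i (fun k => nuAux Pf Pm m (z k))]
    simp
  · rw [if_neg hij]
    have hpt : ∀ zt : Fin (n + 1) → Bool,
        ((indAux (zt i) - m) * (indAux (zt j) - m)) * ∏ k, senseErr Pf Pm (zt k) (z k)
        = ∏ k, (senseErr Pf Pm (zt k) (z k) *
            ((if k = i then indAux (zt k) - m else 1) *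
              (if k = j then indAux (zt k) - m else 1))) := by
      intro zt
      rw [Finset.prod_mul_distrib, Finset.prod_mul_distrib,
        Finset.prod_ite_eq' Finset.univ i (fun k => indAux (zt k) - m),
        Finset.prod_ite_eq' Finset.univ j (fun k => indAux (zt k) - m)]
      simp
      ring
    rw [Finset.sum_congr rfl (fun zt _ => hpt zt),
      sum_prod_bool (n + 1) (fun k a => senseErr Pf Pm a (z k) *
        ((if k = i then indAux a - m else 1) * (if k = j then indAux a - m else 1)))]
    have hfac : ∀ k : Fin (n + 1),
        (senseErr Pf Pm false (z k) *
            ((if k = i then indAux false - m else 1) * (if k = j then indAux false - m else 1))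
          + senseErr Pf Pm true (z k) *
            ((if k = i then indAux true - m else 1) * (if k = j then indAux true - m else 1)))
        = (if k = i then muAux Pf Pm m (z k) else 1) *
            (if k = j then muAux Pf Pm m (z k) else 1) := by
      intro k
      have hji : j ≠ i := fun h => hij h.symm
      by_cases hk : k = i
      · have hkj : k ≠ j := by rw [hk]; exact hij
        simp [hk, hkj, hij, muAux]
      · by_cases hk2 : k = j
        · simp [hk, hk2, hji, muAux]
        · simp [hk, hk2, senseErr_colsum]
    rw [Finset.prod_congr rfl (fun k _ => hfac k), Finset.prod_mul_distrib,
      Finset.prod_ite_eq' Finset.univ i (fun k => muAux Pf Pm m (z k)),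
      Finset.prod_ite_eq' Finset.univ j (fun k => muAux Pf Pm m (z k))]
    simp

lemma seqProb_eq_chainP (u lf Tc : ℝ) {n : ℕ} (z : Fin (n + 1) → Bool) :
    seqProb u lf (fun _ => Tc) z = chainPAux u (Real.exp (-(lf * Tc) / u)) z := by
  unfold seqProb chainPAux pibAux
  congr 1
  apply Finset.prod_congr rfl
  intro k _
  cases z k.castSucc <;> cases z k.succ <;> (simp [transProb, tpAux]; try ring)

lemma cov_eval (u γ' : ℝ) :
    (∑ a : Bool, ∑ b : Bool,
        pibAux u a * (tpAux u γ' a b * ((indAux a - u) * (indAux b - u))))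
    = u * (1 - u) * γ' := by
  simp [Fintype.sum_bool, tpAux, pibAux, indAux]; ring

lemma diag_eval (u Pf Pm γ0 : ℝ) :
    (∑ a : Bool, ∑ b : Bool, pibAux u a * (tpAux u γ0 a b *
      (nuAux Pf Pm (Pf + u * (1 - Pf - Pm)) a * (fun _ : Bool => (1 : ℝ)) b)))
    = u * Pm * (1 - Pm) + (1 - u) * Pf * (1 - Pf) + u * (1 - u) * (1 - Pf - Pm) ^ 2 := by
  simp [Fintype.sum_bool, tpAux, pibAux, nuAux, senseErr, indAux]; ring

lemma offdiag_sum (γ : ℝ) (w : ℕ → ℝ) (n : ℕ) :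
    (∑ i ∈ Finset.range (n + 1), ∑ j ∈ Finset.range (n + 1),
        w i * w j * γ ^ (max i j - min i j))
    = (∑ i ∈ Finset.range (n + 1), w i ^ 2)
      + 2 * ∑ d ∈ Finset.Icc 1 n, γ ^ d *
          ∑ i ∈ Finset.range (n + 1 - d), w i * w (i + d) := by
  classical
  set s := Finset.range (n + 1) ×ˢ Finset.range (n + 1) with hs
  set F : ℕ × ℕ → ℝ := fun p => w p.1 * w p.2 * γ ^ (max p.1 p.2 - min p.1 p.2) with hF
  have h0 : (∑ i ∈ Finset.range (n + 1), ∑ j ∈ Finset.range (n + 1),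
      w i * w j * γ ^ (max i j - min i j)) = ∑ p ∈ s, F p := by
    rw [hs, ← Finset.sum_product']
  rw [h0]
  have hsplit1 : (∑ p ∈ s, F p)
      = (∑ p ∈ s with p.1 < p.2, F p) + ∑ p ∈ s with ¬ p.1 < p.2, F p :=
    (Finset.sum_filter_add_sum_filter_not s _ F).symm
  have hsplit2 : (∑ p ∈ s with ¬ p.1 < p.2, F p)
      = (∑ p ∈ (s.filter (fun p => ¬ p.1 < p.2)) with p.2 < p.1, F p)
        + ∑ p ∈ (s.filter (fun p => ¬ p.1 < p.2)) with ¬ p.2 < p.1, F p :=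
    (Finset.sum_filter_add_sum_filter_not _ _ F).symm
  -- the strict lower part equals the strict upper part
  have hlowset : (s.filter (fun p => ¬ p.1 < p.2)).filter (fun p => p.2 < p.1)
      = s.filter (fun p => p.2 < p.1) := by
    rw [Finset.filter_filter]
    apply Finset.filter_congr
    intro p _
    constructor
    · exact fun h => h.2
    · exact fun h => ⟨by omega, h⟩
  have hdiagset : (s.filter (fun p => ¬ p.1 < p.2)).filter (fun p => ¬ p.2 < p.1)
      = s.filter (fun p => p.1 = p.2) := by
    rw [Finset.filter_filter]
    apply Finset.filter_congr
    intro p _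
    constructor
    · exact fun h => by omega
    · exact fun h => ⟨by omega, by omega⟩
  have hswap : (∑ p ∈ s with p.2 < p.1, F p) = ∑ p ∈ s with p.1 < p.2, F p := by
    apply Finset.sum_nbij' (fun p => (p.2, p.1)) (fun p => (p.2, p.1))
    · intro p hp
      simp only [hs, Finset.mem_filter, Finset.mem_product] at hp ⊢
      exact ⟨⟨hp.1.2, hp.1.1⟩, hp.2⟩
    · intro p hp
      simp only [hs, Finset.mem_filter, Finset.mem_product] at hp ⊢
      exact ⟨⟨hp.1.2, hp.1.1⟩, hp.2⟩
    · intro p _; rfl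
    · intro p _; rfl
    · intro p _
      simp only [hF]
      rw [max_comm, min_comm]
      ring
  have hdiag : (∑ p ∈ s with p.1 = p.2, F p) = ∑ i ∈ Finset.range (n + 1), w i ^ 2 := by
    apply Finset.sum_nbij' (fun p => p.1) (fun i => (i, i))
    · intro p hp
      simp only [hs, Finset.mem_filter, Finset.mem_product] at hp
      exact hp.1.1
    · intro i hi
      simp only [hs, Finset.mem_filter, Finset.mem_product]
      exact ⟨⟨hi, hi⟩, trivial⟩
    · intro p hp
      simp only [hs, Finset.mem_filter, Finset.mem_product] at hp
      have := hp.2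
      ext <;> simp [this.symm]
    · intro i _; rfl
    · intro p hp
      simp only [hs, Finset.mem_filter, Finset.mem_product] at hp
      simp only [hF, ← hp.2]
      have : max p.1 p.1 - min p.1 p.1 = 0 := by omega
      rw [this]
      ring
  have hupper : (∑ p ∈ s with p.1 < p.2, F p)
      = ∑ d ∈ Finset.Icc 1 n, γ ^ d * ∑ i ∈ Finset.range (n + 1 - d), w i * w (i + d) := by
    have hrhs : (∑ d ∈ Finset.Icc 1 n, γ ^ d *
          ∑ i ∈ Finset.range (n + 1 - d), w i * w (i + d))
        = ∑ x ∈ (Finset.Icc 1 n).sigma (fun d => Finset.range (n + 1 - d)),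
            γ ^ x.1 * (w x.2 * w (x.2 + x.1)) := by
      rw [← Finset.sum_sigma' (Finset.Icc 1 n) (fun d => Finset.range (n + 1 - d))
        (fun d i => γ ^ d * (w i * w (i + d)))]
      apply Finset.sum_congr rfl
      intro d _
      rw [Finset.mul_sum]
    rw [hrhs]
    apply Finset.sum_nbij' (fun p => (⟨p.2 - p.1, p.1⟩ : Σ _ : ℕ, ℕ))
      (fun x => (x.2, x.2 + x.1))
    · intro p hp
      simp only [hs, Finset.mem_filter, Finset.mem_product, Finset.mem_range] at hp
      simp only [Finset.mem_sigma, Finset.mem_Icc, Finset.mem_range]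
      omega
    · intro x hx
      simp only [Finset.mem_sigma, Finset.mem_Icc, Finset.mem_range] at hx
      simp only [hs, Finset.mem_filter, Finset.mem_product, Finset.mem_range]
      omega
    · intro p hp
      simp only [hs, Finset.mem_filter, Finset.mem_product, Finset.mem_range] at hp
      have h1 : p.1 + (p.2 - p.1) = p.2 := by omega
      ext <;> simp [h1]
    · intro x hx
      simp only [Finset.mem_sigma, Finset.mem_Icc, Finset.mem_range] at hx
      have h1 : x.2 + x.1 - x.2 = x.1 := by omega
      ext <;> simp [h1]
    · intro p hp
      simp only [hs, Finset.mem_filter, Finset.mem_product, Finset.mem_range] at hp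
      simp only [hF]
      have h1 : max p.1 p.2 - min p.1 p.2 = p.2 - p.1 := by omega
      have h2 : p.1 + (p.2 - p.1) = p.2 := by omega
      rw [h1, h2]
      ring
  rw [hsplit1, hsplit2, hlowset, hdiagset, hswap, hdiag, hupper]
  ring

lemma mu_cov_eval (u Pf Pm γ' : ℝ) :
    (∑ a : Bool, ∑ b : Bool, pibAux u a * (tpAux u γ' a b *
      (muAux Pf Pm (Pf + u * (1 - Pf - Pm)) a * muAux Pf Pm (Pf + u * (1 - Pf - Pm)) b)))
    = (1 - Pf - Pm) ^ 2 * (u * (1 - u)) * γ' := by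
  simp [muAux, senseErr, indAux, tpAux, pibAux, Fintype.sum_bool]; ring

/-- mean squared error of the bias-corrected weighted averaging
estimator `ũ_{w,s}(z̃) = (1/(1-P_f-P_m))(-P_f + ∑ w̃_i z̃_i)` under uniform
sampling (`Γ_c = e^{-λ_f T_c/u}`) with sensing errors; the weights are indexed
0-based here (the paper's `w̃_i` is `w (i-1)`) and `N = n + 1`. -/
theorem weighted_estimator_mse_sensing_errors (u lf Tc Pf Pm : ℝ)
    (hu : 0 < u) (hu1 : u < 1) (hlf : 0 < lf) (hTc : 0 < Tc)
    (hPf : Pf ∈ Set.Icc (0 : ℝ) 1) (hPm : Pm ∈ Set.Icc (0 : ℝ) 1) (hPfm : Pf + Pm ≠ 1)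
    (n : ℕ) (hn : 1 ≤ n) (w : ℕ → ℝ)
    (hw : ∑ i ∈ Finset.range (n + 1), w i = 1) :
    ∑ zt : Fin (n + 1) → Bool,
        (1 / (1 - Pf - Pm) *
            (-Pf + ∑ i : Fin (n + 1), w i.val * (if zt i then (1 : ℝ) else 0)) - u) ^ 2
          * obsProb u lf Pf Pm (fun _ => Tc) zt
      = (u * Pm * (1 - Pm) + (1 - u) * Pf * (1 - Pf)) / (1 - Pf - Pm) ^ 2 *
          ∑ i ∈ Finset.range (n + 1), w i ^ 2
        + u * (1 - u) *
            (∑ i ∈ Finset.range (n + 1), w i ^ 2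
              + 2 * ∑ j ∈ Finset.Icc 1 n, (Real.exp (-(lf * Tc) / u)) ^ j *
                  ∑ i ∈ Finset.range (n + 1 - j), w i * w (i + j)) := by
  classical
  have hc0 : (1 : ℝ) - Pf - Pm ≠ 0 := by
    intro h; apply hPfm; linarith
  set γ : ℝ := Real.exp (-(lf * Tc) / u) with hγ
  set m : ℝ := Pf + u * (1 - Pf - Pm) with hm
  have hsum1 : (∑ i : Fin (n + 1), w i.val) = 1 := by
    rw [Fin.sum_univ_eq_sum_range]; exact hw
  -- pointwise rewriting of the squared deviation
  have hdev : ∀ zt : Fin (n + 1) → Bool,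
      (1 / (1 - Pf - Pm) *
          (-Pf + ∑ i : Fin (n + 1), w i.val * (if zt i then (1 : ℝ) else 0)) - u) ^ 2
      = ∑ i : Fin (n + 1), ∑ j : Fin (n + 1),
          (1 / (1 - Pf - Pm)) ^ 2 *
            ((w i.val * (indAux (zt i) - m)) * (w j.val * (indAux (zt j) - m))) := by
    intro zt
    have hS : (1 / (1 - Pf - Pm) *
          (-Pf + ∑ i : Fin (n + 1), w i.val * (if zt i then (1 : ℝ) else 0)) - u)
        = 1 / (1 - Pf - Pm) * (∑ i : Fin (n + 1), w i.val * (indAux (zt i) - m)) := by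
      have h2 : (∑ i : Fin (n + 1), w i.val * (indAux (zt i) - m))
          = (∑ i : Fin (n + 1), w i.val * (if zt i then (1 : ℝ) else 0))
            - (∑ i : Fin (n + 1), w i.val) * m := by
        rw [Finset.sum_mul, ← Finset.sum_sub_distrib]
        apply Finset.sum_congr rfl
        intro i _
        simp only [indAux]
        ring
      rw [h2, hsum1]
      field_simp
      ring
    rw [hS, mul_pow, pow_two (∑ i : Fin (n + 1), w i.val * (indAux (zt i) - m)),
      Finset.sum_mul_sum, Finset.mul_sum]
    apply Finset.sum_congr rfl; intro i _
    rw [Finset.mul_sum]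
  have hobs : ∀ zt : Fin (n + 1) → Bool,
      obsProb u lf Pf Pm (fun _ => Tc) zt
      = ∑ z : Fin (n + 1) → Bool, chainPAux u γ z *
          ∏ k, senseErr Pf Pm (zt k) (z k) := by
    intro zt
    unfold obsProb
    apply Finset.sum_congr rfl
    intro z _
    rw [seqProb_eq_chainP]
  -- step 1: expand into a quadruple sum ordered i, j, z, zt
  have hstep1 : (∑ zt : Fin (n + 1) → Bool,
        (1 / (1 - Pf - Pm) *
            (-Pf + ∑ i : Fin (n + 1), w i.val * (if zt i then (1 : ℝ) else 0)) - u) ^ 2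
          * obsProb u lf Pf Pm (fun _ => Tc) zt)
      = ∑ i : Fin (n + 1), ∑ j : Fin (n + 1), ∑ z : Fin (n + 1) → Bool,
          ∑ zt : Fin (n + 1) → Bool,
          (1 / (1 - Pf - Pm)) ^ 2 * (w i.val * w j.val) *
            (chainPAux u γ z *
              (((indAux (zt i) - m) * (indAux (zt j) - m)) *
                ∏ k, senseErr Pf Pm (zt k) (z k))) := by
    have h1 : ∀ zt : Fin (n + 1) → Bool,
        (1 / (1 - Pf - Pm) *
            (-Pf + ∑ i : Fin (n + 1), w i.val * (if zt i then (1 : ℝ) else 0)) - u) ^ 2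
          * obsProb u lf Pf Pm (fun _ => Tc) zt
        = ∑ i : Fin (n + 1), ∑ j : Fin (n + 1), ∑ z : Fin (n + 1) → Bool,
            (1 / (1 - Pf - Pm)) ^ 2 * (w i.val * w j.val) *
              (chainPAux u γ z *
                (((indAux (zt i) - m) * (indAux (zt j) - m)) *
                  ∏ k, senseErr Pf Pm (zt k) (z k))) := by
      intro zt
      rw [hdev zt, hobs zt, Finset.sum_mul]
      apply Finset.sum_congr rfl; intro i _
      rw [Finset.sum_mul]
      apply Finset.sum_congr rfl; intro j _
      rw [Finset.mul_sum]
      apply Finset.sum_congr rfl; intro z _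
      ring
    rw [Finset.sum_congr rfl (fun zt _ => h1 zt)]
    rw [Finset.sum_comm]
    apply Finset.sum_congr rfl; intro i _
    rw [Finset.sum_comm]
    apply Finset.sum_congr rfl; intro j _
    rw [Finset.sum_comm]
  rw [hstep1]
  -- step 2: evaluate the inner double sum over z and zt for each pair (i, j)
  have hpair : ∀ i j : Fin (n + 1),
      (∑ z : Fin (n + 1) → Bool, ∑ zt : Fin (n + 1) → Bool,
          (1 / (1 - Pf - Pm)) ^ 2 * (w i.val * w j.val) *
            (chainPAux u γ z *
              (((indAux (zt i) - m) * (indAux (zt j) - m)) *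
                ∏ k, senseErr Pf Pm (zt k) (z k))))
      = (1 / (1 - Pf - Pm)) ^ 2 * (w i.val * w j.val) *
          (if i = j
            then u * Pm * (1 - Pm) + (1 - u) * Pf * (1 - Pf)
                + u * (1 - u) * (1 - Pf - Pm) ^ 2
            else (1 - Pf - Pm) ^ 2 * (u * (1 - u)) *
                γ ^ (max i.val j.val - min i.val j.val)) := by
    intro i j
    have hz : ∀ z : Fin (n + 1) → Bool,
        (∑ zt : Fin (n + 1) → Bool,
          (1 / (1 - Pf - Pm)) ^ 2 * (w i.val * w j.val) *
            (chainPAux u γ z *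
              (((indAux (zt i) - m) * (indAux (zt j) - m)) *
                ∏ k, senseErr Pf Pm (zt k) (z k))))
        = (1 / (1 - Pf - Pm)) ^ 2 * (w i.val * w j.val) *
            (chainPAux u γ z *
              (if i = j then nuAux Pf Pm m (z i)
                else muAux Pf Pm m (z i) * muAux Pf Pm m (z j))) := by
      intro z
      rw [← Finset.mul_sum, ← Finset.mul_sum, ← kernel_pair Pf Pm m z i j]
    rw [Finset.sum_congr rfl (fun z _ => hz z), ← Finset.mul_sum]
    congr 1
    by_cases hij : i = j
    · subst hij
      simp only [eq_self_iff_true, if_true]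
      have h1 : (∑ z : Fin (n + 1) → Bool, chainPAux u γ z * nuAux Pf Pm m (z i))
          = ∑ z : Fin (n + 1) → Bool, chainPAux u γ z *
              (nuAux Pf Pm m (z ⟨i.val, i.isLt⟩) * (fun _ : Bool => (1 : ℝ)) (z ⟨i.val, i.isLt⟩)) := by
        apply Finset.sum_congr rfl; intro z _
        simp only [Fin.eta]
        ring
      rw [h1, chainP_pair u γ n i.val i.val i.isLt i.isLt le_rfl
        (nuAux Pf Pm m) (fun _ => (1 : ℝ)), hm]
      exact diag_eval u Pf Pm (γ ^ (i.val - i.val))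
    · simp only [if_neg hij]
      rcases le_or_gt i.val j.val with hle | hlt
      · have h1 : (∑ z : Fin (n + 1) → Bool,
            chainPAux u γ z * (muAux Pf Pm m (z i) * muAux Pf Pm m (z j)))
            = ∑ z : Fin (n + 1) → Bool, chainPAux u γ z *
                (muAux Pf Pm m (z ⟨i.val, i.isLt⟩) * muAux Pf Pm m (z ⟨j.val, j.isLt⟩)) := by
          apply Finset.sum_congr rfl; intro z _
          simp only [Fin.eta]
        rw [h1, chainP_pair u γ n i.val j.val i.isLt j.isLt hle
          (muAux Pf Pm m) (muAux Pf Pm m), hm, mu_cov_eval]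
        congr 2
        omega
      · have h1 : (∑ z : Fin (n + 1) → Bool,
            chainPAux u γ z * (muAux Pf Pm m (z i) * muAux Pf Pm m (z j)))
            = ∑ z : Fin (n + 1) → Bool, chainPAux u γ z *
                (muAux Pf Pm m (z ⟨j.val, j.isLt⟩) * muAux Pf Pm m (z ⟨i.val, i.isLt⟩)) := by
          apply Finset.sum_congr rfl; intro z _
          simp only [Fin.eta]
          ring
        rw [h1, chainP_pair u γ n j.val i.val j.isLt i.isLt hlt.le
          (muAux Pf Pm m) (muAux Pf Pm m), hm, mu_cov_eval]
        congr 2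
        omega
  rw [Finset.sum_congr rfl (fun i _ => Finset.sum_congr rfl (fun j _ => hpair i j))]
  -- step 3: convert to range sums
  have hpt : ∀ i j : Fin (n + 1),
      (1 / (1 - Pf - Pm)) ^ 2 * (w i.val * w j.val) *
        (if i = j
          then u * Pm * (1 - Pm) + (1 - u) * Pf * (1 - Pf)
              + u * (1 - u) * (1 - Pf - Pm) ^ 2
          else (1 - Pf - Pm) ^ 2 * (u * (1 - u)) *
              γ ^ (max i.val j.val - min i.val j.val))
      = u * (1 - u) * (w i.val * w j.val * γ ^ (max i.val j.val - min i.val j.val))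
        + (if i.val = j.val
            then ((u * Pm * (1 - Pm) + (1 - u) * Pf * (1 - Pf)) / (1 - Pf - Pm) ^ 2)
                * w i.val ^ 2
            else 0) := by
    intro i j
    by_cases hij : i = j
    · subst hij
      simp only [eq_self_iff_true, if_true]
      have h0 : max i.val i.val - min i.val i.val = 0 := by omega
      rw [h0, pow_zero]
      field_simp
      ring
    · have hij' : i.val ≠ j.val := fun h => hij (Fin.ext h)
      simp only [if_neg hij, if_neg hij']
      field_simp
      ring
  rw [Finset.sum_congr rfl (fun i _ => Finset.sum_congr rfl (fun j _ => hpt i j))]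
  have hconv : (∑ i : Fin (n + 1), ∑ j : Fin (n + 1),
      (u * (1 - u) * (w i.val * w j.val * γ ^ (max i.val j.val - min i.val j.val))
        + (if i.val = j.val
            then ((u * Pm * (1 - Pm) + (1 - u) * Pf * (1 - Pf)) / (1 - Pf - Pm) ^ 2)
                * w i.val ^ 2
            else 0)))
      = ∑ i ∈ Finset.range (n + 1), ∑ j ∈ Finset.range (n + 1),
          (u * (1 - u) * (w i * w j * γ ^ (max i j - min i j))
            + (if i = j
                then ((u * Pm * (1 - Pm) + (1 - u) * Pf * (1 - Pf)) / (1 - Pf - Pm) ^ 2)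
                    * w i ^ 2
                else 0)) := by
    rw [← Fin.sum_univ_eq_sum_range (fun i => ∑ j ∈ Finset.range (n + 1),
      (u * (1 - u) * (w i * w j * γ ^ (max i j - min i j))
        + (if i = j
            then ((u * Pm * (1 - Pm) + (1 - u) * Pf * (1 - Pf)) / (1 - Pf - Pm) ^ 2)
                * w i ^ 2
            else 0))) (n + 1)]
    apply Finset.sum_congr rfl; intro i _
    exact Fin.sum_univ_eq_sum_range (fun j =>
      (u * (1 - u) * (w i.val * w j * γ ^ (max i.val j - min i.val j))
        + (if i.val = j
            then ((u * Pm * (1 - Pm) + (1 - u) * Pf * (1 - Pf)) / (1 - Pf - Pm) ^ 2)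
                * w i.val ^ 2
            else 0))) (n + 1)
  rw [hconv]
  have hsplit : (∑ i ∈ Finset.range (n + 1), ∑ j ∈ Finset.range (n + 1),
      (u * (1 - u) * (w i * w j * γ ^ (max i j - min i j))
        + (if i = j
            then ((u * Pm * (1 - Pm) + (1 - u) * Pf * (1 - Pf)) / (1 - Pf - Pm) ^ 2)
                * w i ^ 2
            else 0)))
      = u * (1 - u) * (∑ i ∈ Finset.range (n + 1), ∑ j ∈ Finset.range (n + 1),
          w i * w j * γ ^ (max i j - min i j))
        + ((u * Pm * (1 - Pm) + (1 - u) * Pf * (1 - Pf)) / (1 - Pf - Pm) ^ 2)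
            * ∑ i ∈ Finset.range (n + 1), w i ^ 2 := by
    rw [Finset.mul_sum, Finset.mul_sum, ← Finset.sum_add_distrib]
    apply Finset.sum_congr rfl; intro i hi
    rw [Finset.sum_add_distrib, Finset.mul_sum]
    congr 1
    rw [Finset.sum_ite_eq (Finset.range (n + 1)) i
      (fun _ => ((u * Pm * (1 - Pm) + (1 - u) * Pf * (1 - Pf)) / (1 - Pf - Pm) ^ 2) * w i ^ 2)]
    rw [if_pos hi]
  rw [hsplit, offdiag_sum γ w n]
  ring
end
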